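/- arXiv:2104.10628 — 7 statements merged into one kernel-verified Lean document; each statement's English description precedes it below -/
import Mathlib

section
/- The sequence defined by Q_r = (3·P_{r-1}(3) − P_{r-2}(3))/(4r), where P_l are Legendre polynomials, satisfies the super Catalan recursion r·Q_r = 3(2r-3)·Q_{r-1} − (r-3)·Q_{r-2}. -/
/-- The Legendre polynomials (as functions `ℝ → ℝ`), defined by
`P_0 = 1`, `P_1(x) = x` and `(l+1)·P_{l+1}(x) = (2l+1)·x·P_l(x) − l·P_{l-1}(x)`. -/
noncomputable def legendre : ℕ → ℝ → ℝ
  | 0, _ => 1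
  | 1, x => x
  | l + 2, x => ((2 * (l : ℝ) + 3) * x * legendre (l + 1) x - ((l : ℝ) + 1) * legendre l x) /
      ((l : ℝ) + 2)

/-- `Q_r := (3·P_{r-1}(3) − P_{r-2}(3))/(4r)`. -/
noncomputable def Q (r : ℕ) : ℝ :=
  (3 * legendre (r - 1) 3 - legendre (r - 2) 3) / (4 * (r : ℝ))

/-- The sequence `Q_r` satisfies the super Catalan recursion
`r·Q_r = 3(2r-3)·Q_{r-1} − (r-3)·Q_{r-2}` for `r ≥ 4`. -/
theorem Q_satisfies_superCatalan_recursion (r : ℕ) (hr : 4 ≤ r) :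
    (r : ℝ) * Q r = 3 * (2 * (r : ℝ) - 3) * Q (r - 1) - ((r : ℝ) - 3) * Q (r - 2) := by
  obtain ⟨n, rfl⟩ : ∃ n, r = n + 4 := ⟨r - 4, by omega⟩
  simp only [Q, show n + 4 - 1 = n + 3 from rfl, show n + 4 - 2 = n + 2 from rfl,
    show n + 3 - 1 = n + 2 from rfl, show n + 3 - 2 = n + 1 from rfl,
    show n + 2 - 1 = n + 1 from rfl, show n + 2 - 2 = n from rfl]
  have h1 : legendre (n + 3) 3 = ((2 * ((n:ℝ)+1) + 3) * 3 * legendre (n + 2) 3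
      - (((n:ℝ)+1) + 1) * legendre (n + 1) 3) / (((n:ℝ)+1) + 2) := by
    rw [show n + 3 = (n + 1) + 2 from rfl, legendre]
    push_cast; ring_nf
  have h2 : legendre (n + 2) 3 = ((2 * (n:ℝ) + 3) * 3 * legendre (n + 1) 3
      - ((n:ℝ) + 1) * legendre n 3) / ((n:ℝ) + 2) := by
    rw [legendre]
  have hn2 : (n:ℝ) + 2 ≠ 0 := by positivity
  have hn3 : (n:ℝ) + 3 ≠ 0 := by positivity
  have hn1 : (n:ℝ) + 1 ≠ 0 := by positivity
  have hn4 : (n:ℝ) + 4 ≠ 0 := by positivity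
  rw [h1, h2]
  push_cast
  field_simp
  ring
end

section
/- If a binary tree T is planar with respect to two cyclic orderings α and β, and {i,j} is a cherry of T, then the tree T' obtained by pruning the cherry (deleting leaf i and suppressing the resulting degree-2 vertex) is planar with respect to the orderings α' and β' obtained by deleting i from α and β. -/
/-- `A` is a contiguous arc of the cyclic ordering given by the list `l`. -/
def IsArc (l : List ℕ) (A : Finset ℕ) : Prop :=
  ∃ k m : ℕ, A = ((l.rotate k).take m).toFinset

/-- `T` is the split system of an unrooted binary tree with leaf set `L`:
a collection of `2(|L|-3)` subsets of `L` (the two sides of each internal edge),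
closed under complementation, with each member of size between `2` and `|L|-2`,
and pairwise compatible. -/
def IsTreeSplits (L : Finset ℕ) (T : Finset (Finset ℕ)) : Prop :=
  (∀ A ∈ T, A ⊆ L ∧ 2 ≤ A.card ∧ A.card + 2 ≤ L.card) ∧
  (∀ A ∈ T, L \ A ∈ T) ∧
  (∀ A ∈ T, ∀ B ∈ T, A ⊆ B ∨ B ⊆ A ∨ A ∩ B = ∅ ∨ L ⊆ A ∪ B) ∧
  T.card = 2 * (L.card - 3)

/-- The tree with split system `T` is planar with respect to the cyclic ordering `l`:
every split is a contiguous arc of `l`. -/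
def Planar (l : List ℕ) (T : Finset (Finset ℕ)) : Prop :=
  ∀ A ∈ T, IsArc l A

/-- `l` is a cyclic ordering of the finite set `L`. -/
def IsOrdering (L : Finset ℕ) (l : List ℕ) : Prop :=
  l.Nodup ∧ l.toFinset = L

/-- `i` and `j` are cyclically adjacent in the ordering `l`. -/
def AdjPair (l : List ℕ) (i j : ℕ) : Prop :=
  ∃ k : ℕ, (l.rotate k).take 2 = [i, j] ∨ (l.rotate k).take 2 = [j, i]

/-- Prune leaf `i`: delete `i` from every split and keep only the nontrivial splits
of the new leaf set `L'`. -/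
def prune (i : ℕ) (L' : Finset ℕ) (T : Finset (Finset ℕ)) : Finset (Finset ℕ) :=
  (T.image fun A => A.erase i).filter fun A => 2 ≤ A.card ∧ A.card + 2 ≤ L'.card

lemma rotate_flip (x y : List ℕ) : (x ++ y).rotate x.length = y ++ x := by
  rw [List.rotate_eq_drop_append_take (by simp), List.drop_left, List.take_left]

lemma erase_rotate (l : List ℕ) (hl : l.Nodup) (k i : ℕ) :
    ∃ k', (l.rotate k).erase i = (l.erase i).rotate k' := by
  by_cases hi : i ∈ l
  · rcases Nat.eq_zero_or_pos l.length with h0 | hpos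
    · exact ⟨0, by simp [List.eq_nil_of_length_eq_zero h0] at hi⟩
    have hle : k % l.length ≤ l.length := le_of_lt (Nat.mod_lt _ hpos)
    rw [← List.rotate_mod, List.rotate_eq_drop_append_take hle]
    set n := k % l.length
    have hsplit : l.take n ++ l.drop n = l := List.take_append_drop n l
    have hdisj : (l.take n).Disjoint (l.drop n) := List.disjoint_take_drop hl le_rfl
    by_cases hd : i ∈ l.drop n
    · have hnt : i ∉ l.take n := fun h => hdisj h hd
      refine ⟨(l.take n).length, ?_⟩
      rw [List.erase_append_left _ hd]
      have : l.erase i = l.take n ++ (l.drop n).erase i := by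
        conv_lhs => rw [← hsplit]
        rw [List.erase_append_right _ hnt]
      rw [this, rotate_flip]
    · have ht : i ∈ l.take n := by
        rw [← hsplit] at hi; rcases List.mem_append.1 hi with h | h
        · exact h
        · exact absurd h hd
      refine ⟨((l.take n).erase i).length, ?_⟩
      rw [List.erase_append_right _ hd]
      have : l.erase i = (l.take n).erase i ++ l.drop n := by
        conv_lhs => rw [← hsplit]
        rw [List.erase_append_left _ ht]
      rw [this, rotate_flip]
  · refine ⟨k, ?_⟩
    rw [List.erase_of_not_mem hi, List.erase_of_not_mem (by simp [hi])]

lemma toFinset_erase_list (l : List ℕ) (hl : l.Nodup) (i : ℕ) :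
    (l.erase i).toFinset = l.toFinset.erase i := by
  ext x
  simp [List.Nodup.mem_erase_iff hl, and_comm]

lemma isArc_of_rotate {l : List ℕ} {k : ℕ} {A : Finset ℕ} (h : IsArc (l.rotate k) A) :
    IsArc l A := by
  obtain ⟨k2, m, rfl⟩ := h
  exact ⟨k + k2, m, by rw [List.rotate_rotate]⟩

lemma isArc_erase {l : List ℕ} (hl : l.Nodup) {i : ℕ} {A : Finset ℕ} (h : IsArc l A) :
    IsArc (l.erase i) (A.erase i) := by
  obtain ⟨k, m, rfl⟩ := h
  set r := l.rotate k with hr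
  have hrn : r.Nodup := by rw [hr, List.nodup_rotate]; exact hl
  obtain ⟨k', hk'⟩ := erase_rotate l hl k i
  have key : IsArc (r.erase i) (((r.take m).toFinset).erase i) := by
    have hsplit : r.take m ++ r.drop m = r := List.take_append_drop m r
    by_cases ht : i ∈ r.take m
    · refine ⟨0, ((r.take m).erase i).length, ?_⟩
      have h1 : r.erase i = (r.take m).erase i ++ r.drop m := by
        conv_lhs => rw [← hsplit]; rw [List.erase_append_left _ ht]
      rw [List.rotate_zero, h1, List.take_left,
        toFinset_erase_list _ (hrn.sublist (List.take_sublist m r)) i]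
    · refine ⟨0, (r.take m).length, ?_⟩
      have h1 : r.erase i = r.take m ++ (r.drop m).erase i := by
        conv_lhs => rw [← hsplit]; rw [List.erase_append_right _ ht]
      rw [List.rotate_zero, h1, List.take_left, Finset.erase_eq_of_notMem (by simpa using ht)]
  rw [hk'] at key
  exact isArc_of_rotate key

/-- If a binary tree `T` is planar with respect to two cyclic orderings `a` and `b`,
and `{i,j}` is a cherry of `T`, then the tree obtained by pruning leaf `i` is an
unrooted binary tree on the remaining `n-1` leaves which is planar with respect to the
orderings obtained by deleting `i` from `a` and from `b`. -/
theorem prune_planar (L : Finset ℕ) (hL : 5 ≤ L.card) (T : Finset (Finset ℕ))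
    (hT : IsTreeSplits L T) (a b : List ℕ) (ha : IsOrdering L a) (hb : IsOrdering L b)
    (hpa : Planar a T) (hpb : Planar b T) (i j : ℕ) (hij : i ≠ j)
    (hch : ({i, j} : Finset ℕ) ∈ T) :
    IsTreeSplits (L.erase i) (prune i (L.erase i) T) ∧
    Planar (a.erase i) (prune i (L.erase i) T) ∧
    Planar (b.erase i) (prune i (L.erase i) T) := by
  obtain ⟨hT1, hT2, hT3, hT4⟩ := hT
  have hchL : ({i, j} : Finset ℕ) ⊆ L := (hT1 _ hch).1
  have hiL : i ∈ L := hchL (by simp)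
  have hjL : j ∈ L := hchL (by simp)
  have hcardL' : (L.erase i).card = L.card - 1 := Finset.card_erase_of_mem hiL
  have hcardch : ({i, j} : Finset ℕ).card = 2 := by
    rw [Finset.card_insert_of_notMem (by simp [hij]), Finset.card_singleton]
  have hco : L \ {i, j} ∈ T := hT2 _ hch
  have hcardco : (L \ ({i, j} : Finset ℕ)).card = L.card - 2 := by
    rw [Finset.card_sdiff_of_subset hchL, hcardch]
  have hchne : ({i, j} : Finset ℕ) ≠ L \ {i, j} := by
    intro h
    rw [h, hcardco] at hcardch
    omega
  -- no split contains all of L minus one point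
  have hnotbig : ∀ B ∈ T, ∀ x ∈ L, L.erase x ⊆ B → False := by
    intro B hB x hx hsub
    have h1 := Finset.card_le_card hsub
    rw [Finset.card_erase_of_mem hx] at h1
    have h2 := (hT1 B hB).2.2
    omega
  -- if i ∈ A and A is not the cherry, then {i,j} ⊆ A
  have hsubij : ∀ A ∈ T, A ≠ {i, j} → i ∈ A → ({i, j} : Finset ℕ) ⊆ A := by
    intro A hA hne hiA
    rcases hT3 A hA {i, j} hch with h | h | h | h
    · exact absurd (Finset.eq_of_subset_of_card_le h
        (by rw [hcardch]; exact (hT1 A hA).2.1)) hne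
    · exact h
    · exfalso
      have : i ∈ A ∩ ({i, j} : Finset ℕ) := Finset.mem_inter.2 ⟨hiA, by simp⟩
      rw [h] at this; simp at this
    · exfalso
      refine hnotbig A hA j hjL ?_
      intro x hx
      have hx' := Finset.mem_erase.1 hx
      rcases Finset.mem_union.1 (h hx'.2) with h1 | h1
      · exact h1
      · rcases Finset.mem_insert.1 h1 with rfl | h2
        · exact hiA
        · exact absurd (Finset.mem_singleton.1 h2) hx'.1
  -- if i ∉ A and A ≠ cocherry, then A is small
  have hsmall : ∀ A ∈ T, A ≠ L \ {i, j} → i ∉ A → A.card + 3 ≤ L.card := by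
    intro A hA hne hiA
    rcases hT3 A hA {i, j} hch with h | h | h | h
    · exfalso
      have hsub' : A ⊆ {j} := by
        intro x hx
        rcases Finset.mem_insert.1 (h hx) with rfl | h2
        · exact absurd hx hiA
        · exact h2
      have := Finset.card_le_card hsub'
      have h2 := (hT1 A hA).2.1
      simp at this; omega
    · exact absurd (h (by simp)) hiA
    · have hsub' : A ⊆ L \ {i, j} := by
        intro x hx
        refine Finset.mem_sdiff.2 ⟨(hT1 A hA).1 hx, fun hx2 => ?_⟩
        have : x ∈ A ∩ ({i, j} : Finset ℕ) := Finset.mem_inter.2 ⟨hx, hx2⟩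
        rw [h] at this; simp at this
      have hlt : A.card < (L \ ({i, j} : Finset ℕ)).card :=
        Finset.card_lt_card (hsub'.ssubset_of_ne hne)
      omega
    · by_cases hjA : j ∈ A
      · exfalso
        refine hnotbig A hA i hiL ?_
        intro x hx
        have hx' := Finset.mem_erase.1 hx
        rcases Finset.mem_union.1 (h hx'.2) with h1 | h1
        · exact h1
        · rcases Finset.mem_insert.1 h1 with rfl | h2
          · exact absurd rfl hx'.1
          · rw [Finset.mem_singleton.1 h2]; exact hjA
      · exfalso
        apply hne
        apply Finset.Subset.antisymm
        · intro x hx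
          refine Finset.mem_sdiff.2 ⟨(hT1 A hA).1 hx, fun hx2 => ?_⟩
          rcases Finset.mem_insert.1 hx2 with rfl | h2
          · exact hiA hx
          · rw [Finset.mem_singleton.1 h2] at hx; exact hjA hx
        · intro x hx
          have hx' := Finset.mem_sdiff.1 hx
          rcases Finset.mem_union.1 (h hx'.1) with h1 | h1
          · exact h1
          · exact absurd h1 hx'.2
  set S : Finset (Finset ℕ) := (T.erase {i, j}).erase (L \ {i, j}) with hS
  have hmemS : ∀ A, A ∈ S ↔ A ∈ T ∧ A ≠ {i, j} ∧ A ≠ L \ {i, j} := by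
    intro A
    simp only [hS, Finset.mem_erase]
    tauto
  -- the filter conditions hold exactly on S
  have hgood : ∀ A ∈ S, 2 ≤ (A.erase i).card ∧ (A.erase i).card + 2 ≤ (L.erase i).card := by
    intro A hA
    obtain ⟨hAT, hne1, hne2⟩ := (hmemS A).1 hA
    have hAcard := (hT1 A hAT).2.1
    have hAcard2 := (hT1 A hAT).2.2
    by_cases hiA : i ∈ A
    · have hss : ({i, j} : Finset ℕ) ⊂ A :=
        (hsubij A hAT hne1 hiA).ssubset_of_ne (Ne.symm hne1)
      have h3 : 2 < A.card := by
        have := Finset.card_lt_card hss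
        omega
      rw [Finset.card_erase_of_mem hiA, hcardL']
      omega
    · rw [Finset.erase_eq_of_notMem hiA, hcardL']
      have := hsmall A hAT hne2 hiA
      omega
  have himg : prune i (L.erase i) T = S.image fun A => A.erase i := by
    ext A'
    simp only [prune, Finset.mem_filter, Finset.mem_image]
    constructor
    · rintro ⟨⟨A, hA, rfl⟩, h2, h3⟩
      refine ⟨A, (hmemS A).2 ⟨hA, ?_, ?_⟩, rfl⟩
      · rintro rfl
        rw [show ({i, j} : Finset ℕ).erase i = {j} from
          Finset.erase_insert (by simp [hij])] at h2
        simp at h2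
      · rintro rfl
        have hi : i ∉ L \ ({i, j} : Finset ℕ) := by simp
        rw [Finset.erase_eq_of_notMem hi, hcardco, hcardL'] at h3
        omega
    · rintro ⟨A, hA, rfl⟩
      exact ⟨⟨A, ((hmemS A).1 hA).1, rfl⟩, hgood A hA⟩
  have hinj : Set.InjOn (fun A : Finset ℕ => A.erase i) ↑S := by
    intro A hA B hB hAB
    simp only [Finset.mem_coe] at hA hB
    obtain ⟨hAT, hAne1, _⟩ := (hmemS A).1 hA
    obtain ⟨hBT, hBne1, _⟩ := (hmemS B).1 hB
    simp only at hAB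
    have key : ∀ C D : Finset ℕ, C ∈ T → D ∈ T → C ≠ {i, j} → D ≠ {i, j} →
        C.erase i = D.erase i → i ∈ C → i ∉ D → False := by
      intro C D hCT hDT hCne hDne hCD hiC hiD
      have hjC : j ∈ C := hsubij C hCT hCne hiC (by simp)
      have hjD : j ∈ D := by
        rw [Finset.erase_eq_of_notMem hiD] at hCD
        rw [← hCD]
        exact Finset.mem_erase.2 ⟨Ne.symm hij, hjC⟩
      rcases hT3 D hDT {i, j} hch with h | h | h | h
      · have hsub' : D ⊆ {j} := by
          intro x hx
          rcases Finset.mem_insert.1 (h hx) with rfl | h2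
          · exact absurd hx hiD
          · exact h2
        have := Finset.card_le_card hsub'
        have h2 := (hT1 D hDT).2.1
        simp at this; omega
      · exact hiD (h (by simp))
      · have : j ∈ D ∩ ({i, j} : Finset ℕ) := Finset.mem_inter.2 ⟨hjD, by simp⟩
        rw [h] at this; simp at this
      · refine hnotbig D hDT i hiL ?_
        intro x hx
        have hx' := Finset.mem_erase.1 hx
        rcases Finset.mem_union.1 (h hx'.2) with h1 | h1
        · exact h1
        · rcases Finset.mem_insert.1 h1 with rfl | h2
          · exact absurd rfl hx'.1
          · rw [Finset.mem_singleton.1 h2]; exact hjD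
    by_cases hiA : i ∈ A <;> by_cases hiB : i ∈ B
    · rw [← Finset.insert_erase hiA, hAB, Finset.insert_erase hiB]
    · exact absurd (key A B hAT hBT hAne1 hBne1 hAB hiA hiB) not_false
    · exact absurd (key B A hBT hAT hBne1 hAne1 hAB.symm hiB hiA) not_false
    · rw [← Finset.erase_eq_of_notMem hiA, hAB, Finset.erase_eq_of_notMem hiB]
  have hcardS : S.card = T.card - 2 := by
    rw [hS, Finset.card_erase_of_mem, Finset.card_erase_of_mem hch]
    · omega
    · exact Finset.mem_erase.2 ⟨Ne.symm hchne, hco⟩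
  have hcardprune : (prune i (L.erase i) T).card = 2 * ((L.erase i).card - 3) := by
    rw [himg, Finset.card_image_of_injOn hinj, hcardS, hT4, hcardL']
    omega
  have hmem_prune : ∀ A' ∈ prune i (L.erase i) T,
      ∃ A ∈ T, A' = A.erase i ∧ 2 ≤ A'.card ∧ A'.card + 2 ≤ (L.erase i).card := by
    intro A' hA'
    simp only [prune, Finset.mem_filter, Finset.mem_image] at hA'
    obtain ⟨⟨A, hA, rfl⟩, h2, h3⟩ := hA'
    exact ⟨A, hA, rfl, h2, h3⟩
  refine ⟨⟨?_, ?_, ?_, hcardprune⟩, ?_, ?_⟩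
  · intro A' hA'
    obtain ⟨A, hA, rfl, h2, h3⟩ := hmem_prune A' hA'
    exact ⟨Finset.erase_subset_erase i (hT1 A hA).1, h2, h3⟩
  · intro A' hA'
    obtain ⟨A, hA, rfl, h2, h3⟩ := hmem_prune A' hA'
    have heq : L.erase i \ A.erase i = (L \ A).erase i := by
      ext x
      simp only [Finset.mem_sdiff, Finset.mem_erase]
      tauto
    have hsub : A.erase i ⊆ L.erase i := Finset.erase_subset_erase i (hT1 A hA).1
    have hcards : (L.erase i \ A.erase i).card = (L.erase i).card - (A.erase i).card :=
      Finset.card_sdiff_of_subset hsub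
    simp only [prune, Finset.mem_filter, Finset.mem_image]
    refine ⟨⟨L \ A, hT2 A hA, heq.symm⟩, ?_, ?_⟩ <;> omega
  · intro A' hA' B' hB'
    obtain ⟨A, hA, rfl, _, _⟩ := hmem_prune A' hA'
    obtain ⟨B, hB, rfl, _, _⟩ := hmem_prune B' hB'
    rcases hT3 A hA B hB with h | h | h | h
    · exact Or.inl (Finset.erase_subset_erase i h)
    · exact Or.inr (Or.inl (Finset.erase_subset_erase i h))
    · refine Or.inr (Or.inr (Or.inl ?_))
      have hsub : A.erase i ∩ B.erase i ⊆ A ∩ B :=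
        Finset.inter_subset_inter (Finset.erase_subset i A) (Finset.erase_subset i B)
      rw [h] at hsub
      exact Finset.subset_empty.1 hsub
    · refine Or.inr (Or.inr (Or.inr ?_))
      intro x hx
      have hx' := Finset.mem_erase.1 hx
      rcases Finset.mem_union.1 (h hx'.2) with h1 | h1
      · exact Finset.mem_union_left _ (Finset.mem_erase.2 ⟨hx'.1, h1⟩)
      · exact Finset.mem_union_right _ (Finset.mem_erase.2 ⟨hx'.1, h1⟩)
  · intro A' hA'
    obtain ⟨A, hA, rfl, _, _⟩ := hmem_prune A' hA'
    exact isArc_erase ha.1 (hpa A hA)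
  · intro A' hA'
    obtain ⟨A, hA, rfl, _, _⟩ := hmem_prune A' hA'
    exact isArc_erase hb.1 (hpb A hA)
end

section
/- Two cyclic orderings α and β of {1,...,n} share a common planar binary tree if and only if there is a sequence of prunings reducing both orderings to length 3, where a pruning picks a pair {i,j} that is adjacent in both α and β and deletes i from both orderings. -/
/-- Two cyclic orderings are compatible if some unrooted binary tree is planar with
respect to both. -/
def Compatible (L : Finset ℕ) (a b : List ℕ) : Prop :=
  ∃ T : Finset (Finset ℕ), IsTreeSplits L T ∧ Planar a T ∧ Planar b T

section Aux
open List


lemma isArc_iff {l : List ℕ} {A : Finset ℕ} :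
    IsArc l A ↔ ∃ u v : List ℕ, l ~r (u ++ v) ∧ A = u.toFinset := by
  constructor
  · rintro ⟨k, m, rfl⟩
    exact ⟨(l.rotate k).take m, (l.rotate k).drop m, by rw [List.take_append_drop]; exact ⟨k, rfl⟩, rfl⟩
  · rintro ⟨u, v, ⟨k, hk⟩, rfl⟩
    exact ⟨k, u.length, by rw [hk, List.take_left]⟩

lemma IsRotated.isArc {l l' : List ℕ} (h : l ~r l') {A : Finset ℕ} (hA : IsArc l A) :
    IsArc l' A := by
  rw [isArc_iff] at hA ⊢
  obtain ⟨u, v, hr, rfl⟩ := hA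
  exact ⟨u, v, h.symm.trans hr, rfl⟩

lemma rotate_one_erase (x : ℕ) (l : List ℕ) (hl : l.Nodup) :
    (l.rotate 1).erase x ~r l.erase x := by
  cases l with
  | nil => simp
  | cons y t =>
    have h1 : (y :: t).rotate 1 = t ++ [y] := by
      simpa using List.rotate_cons_succ t y 0
    rw [h1]
    rcases eq_or_ne x y with rfl | hxy
    · have hxt : x ∉ t := (List.nodup_cons.mp hl).1
      rw [List.erase_append_right _ hxt, List.erase_cons_head]
      simpa using IsRotated.refl t
    · have h2 : (y :: t).erase x = y :: t.erase x := by
        rw [List.erase_cons_tail]; simp [hxy.symm]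
      have h3 : (t ++ [y]).erase x = t.erase x ++ [y] := by
        by_cases hx : x ∈ t
        · exact List.erase_append_left _ hx
        · rw [List.erase_append_right _ hx, List.erase_of_not_mem hx,
            List.erase_of_not_mem (by simp [hxy])]
      rw [h2, h3]
      exact (List.isRotated_append (l := t.erase x) (l' := [y]))
  
lemma erase_rotated (x : ℕ) {l l' : List ℕ} (hl : l.Nodup) (h : l ~r l') :
    l.erase x ~r l'.erase x := by
  obtain ⟨k, rfl⟩ := h
  induction k with
  | zero => rw [List.rotate_zero]
  | succ k ih =>
    have hr : l.rotate (k+1) = (l.rotate k).rotate 1 := by rw [List.rotate_rotate]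
    rw [hr]
    exact ih.trans ((rotate_one_erase x (l.rotate k) (List.nodup_rotate.mpr hl)).symm)

lemma same_head {j : ℕ} {w w' : List ℕ} (hn : (j :: w).Nodup) (h : (j :: w) ~r (j :: w')) :
    w = w' := by
  obtain ⟨k, hk⟩ := h
  have hlen : 0 < (j :: w).length := by simp
  have hmod : (j :: w).rotate (k % (j :: w).length) = j :: w' := by
    rw [List.rotate_mod]; exact hk
  rcases Nat.eq_zero_or_pos (k % (j :: w).length) with h0 | hpos
  · rw [h0, List.rotate_zero] at hmod
    exact (List.cons_eq_cons.mp hmod).2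
  · exfalso
    have hlt : k % (j :: w).length ≤ (j :: w).length := (Nat.mod_lt _ hlen).le
    rw [List.rotate_eq_drop_append_take hlt] at hmod
    obtain ⟨q, hq⟩ : ∃ q, k % (j :: w).length = q + 1 := ⟨k % (j :: w).length - 1, by omega⟩
    have hdrop : (j :: w).drop (k % (j :: w).length) = w.drop q := by
      rw [hq, List.drop_succ_cons]
    rw [hdrop] at hmod
    have hstrict : k % (j :: w).length < (j :: w).length := Nat.mod_lt _ hlen
    have hlen' : (j :: w).length = w.length + 1 := by simp
    rcases he : w.drop q with _ | ⟨h1, t1⟩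
    · have : (w.drop q).length = 0 := by rw [he]; rfl
      rw [List.length_drop] at this
      omega
    · rw [he] at hmod
      simp only [List.cons_append] at hmod
      have hj : h1 = j := (List.cons_eq_cons.mp hmod).1
      have : j ∈ w := by
        apply List.mem_of_mem_drop (i := q)
        rw [he, hj]; exact List.mem_cons_self
      exact (List.nodup_cons.mp hn).1 this

lemma toFinset_erase_of_nodup {u : List ℕ} (h : u.Nodup) (x : ℕ) :
    (u.erase x).toFinset = u.toFinset.erase x := by
  ext y
  simp only [List.mem_toFinset, Finset.mem_erase, List.Nodup.mem_erase_iff h]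

/-- erasing an element of the cycle keeps arcs arcs. -/
lemma isArc_erase_s11 {a : List ℕ} {A : Finset ℕ} (hnd : a.Nodup) (x : ℕ) (h : IsArc a A) :
    IsArc (a.erase x) (A.erase x) := by
  rw [isArc_iff] at h ⊢
  obtain ⟨u, v, hr, rfl⟩ := h
  have hnd' : (u ++ v).Nodup := hr.nodup_iff.mp hnd
  have her : a.erase x ~r (u ++ v).erase x := erase_rotated x hnd hr
  by_cases hx : x ∈ u
  · refine ⟨u.erase x, v, ?_, ?_⟩
    · rwa [List.erase_append_left _ hx] at her
    · exact (toFinset_erase_of_nodup (List.nodup_append.mp hnd').1 x).symm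
  · refine ⟨u, v.erase x, ?_, ?_⟩
    · rwa [List.erase_append_right _ hx] at her
    · rw [Finset.erase_eq_of_notMem (by simpa using hx)]

/-- the complement of an arc is an arc. -/
lemma isArc_compl {a : List ℕ} {A : Finset ℕ} (hnd : a.Nodup) (h : IsArc a A) :
    IsArc a (a.toFinset \ A) := by
  rw [isArc_iff] at h ⊢
  obtain ⟨u, v, hr, rfl⟩ := h
  refine ⟨v, u, hr.trans List.isRotated_append, ?_⟩
  have hnd' : (u ++ v).Nodup := hr.nodup_iff.mp hnd
  have hdisj := (List.nodup_append.mp hnd').2.2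
  have htf : a.toFinset = u.toFinset ∪ v.toFinset := by
    rw [List.toFinset_eq_of_perm _ _ hr.perm, List.toFinset_append]
  rw [htf]
  ext y
  simp only [Finset.mem_sdiff, Finset.mem_union, List.mem_toFinset]
  constructor
  · rintro ⟨hy | hy, hy2⟩
    · exact absurd hy hy2
    · exact hy
  · intro hy
    exact ⟨Or.inr hy, fun hyu => hdisj y hyu y hy rfl⟩

lemma adjPair_rot {a : List ℕ} {i j : ℕ} (hlen : 2 ≤ a.length) (h : AdjPair a i j) :
    ∃ w, a ~r (i :: j :: w) ∨ a ~r (j :: i :: w) := by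
  obtain ⟨k, hk⟩ := h
  have hlen' : 2 ≤ (a.rotate k).length := by rwa [List.length_rotate]
  rcases hr : a.rotate k with _ | ⟨x, _ | ⟨y, t⟩⟩
  · rw [hr] at hlen'; simp at hlen'
  · rw [hr] at hlen'; simp at hlen'
  · rw [hr] at hk
    simp only [List.take_succ_cons, List.take] at hk
    rcases hk with hk | hk <;>
      [ (refine ⟨t, Or.inl ?_⟩) ; (refine ⟨t, Or.inr ?_⟩)] <;>
      · obtain ⟨h1, h2, -⟩ : _ ∧ _ ∧ True := by
          simpa using hk
        subst h1; subst h2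
        exact ⟨k, hr⟩

lemma rot_adjPair {a : List ℕ} {i j : ℕ} {w : List ℕ}
    (h : a ~r (i :: j :: w) ∨ a ~r (j :: i :: w)) : AdjPair a i j := by
  rcases h with ⟨k, hk⟩ | ⟨k, hk⟩
  · exact ⟨k, Or.inl (by rw [hk]; rfl)⟩
  · exact ⟨k, Or.inr (by rw [hk]; rfl)⟩

lemma isArc_pair_adjPair {a : List ℕ} {i j : ℕ} (hnd : a.Nodup) (hij : i ≠ j)
    (h : IsArc a {i, j}) : AdjPair a i j := by
  rw [isArc_iff] at h
  obtain ⟨u, v, hr, hu⟩ := h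
  have hnd' : (u ++ v).Nodup := hr.nodup_iff.mp hnd
  have hndu : u.Nodup := (List.nodup_append.mp hnd').1
  have hlen : u.length = 2 := by
    rw [← List.toFinset_card_of_nodup hndu, ← hu, Finset.card_pair hij]
  rcases u with _ | ⟨p, _ | ⟨q, _ | ⟨r, t⟩⟩⟩ <;> simp at hlen
  obtain ⟨k, hk⟩ := hr
  have hpq : ({p, q} : Finset ℕ) = {i, j} := by
    rw [hu]; ext y; simp
  have hmem : ∀ y : ℕ, (y = p ∨ y = q) ↔ (y = i ∨ y = j) := by
    intro y
    have := Finset.ext_iff.mp hpq y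
    simpa using this
  have hne : p ≠ q := by simp [List.nodup_cons] at hndu; tauto
  have hcase : (p = i ∧ q = j) ∨ (p = j ∧ q = i) := by
    rcases (hmem p).mp (Or.inl rfl) with h1 | h1 <;>
      rcases (hmem q).mp (Or.inr rfl) with h2 | h2 <;>
      first
        | exact Or.inl ⟨h1, h2⟩
        | exact Or.inr ⟨h1, h2⟩
        | (exfalso; subst h1; subst h2; first | exact hne rfl | exact hij rfl | (apply hne; rfl))
  apply rot_adjPair (w := v)
  rcases hcase with ⟨rfl, rfl⟩ | ⟨rfl, rfl⟩
  · exact Or.inl ⟨k, by simpa using hk⟩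
  · exact Or.inr ⟨k, by simpa using hk⟩

lemma decomp_mem {j : ℕ} {w u v : List ℕ} (hn : (j :: w).Nodup)
    (hr : (j :: w) ~r (u ++ v)) (hj : j ∈ u) :
    ∃ u₁ u₂, u = u₁ ++ j :: u₂ ∧ w = u₂ ++ v ++ u₁ := by
  obtain ⟨u₁, u₂, rfl⟩ := List.append_of_mem hj
  refine ⟨u₁, u₂, rfl, ?_⟩
  apply same_head hn
  have h2 : ((u₁ ++ j :: u₂) ++ v) ~r (j :: (u₂ ++ v ++ u₁)) := by
    have : (u₁ ++ j :: u₂) ++ v = u₁ ++ ((j :: u₂) ++ v) := by simp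
    rw [this]
    have h3 := List.isRotated_append (l := u₁) (l' := (j :: u₂) ++ v)
    have : ((j :: u₂) ++ v) ++ u₁ = j :: (u₂ ++ v ++ u₁) := by simp
    rwa [this] at h3
  exact hr.trans h2

lemma decomp_notmem {j : ℕ} {w u v : List ℕ} (hn : (j :: w).Nodup)
    (hr : (j :: w) ~r (u ++ v)) (hj : j ∈ v) :
    ∃ v₁ v₂, v = v₁ ++ j :: v₂ ∧ w = v₂ ++ u ++ v₁ := by
  obtain ⟨v₁, v₂, rfl⟩ := List.append_of_mem hj
  refine ⟨v₁, v₂, rfl, ?_⟩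
  apply same_head hn
  have h2 : (u ++ (v₁ ++ j :: v₂)) ~r (j :: (v₂ ++ u ++ v₁)) := by
    have : u ++ (v₁ ++ j :: v₂) = (u ++ v₁) ++ (j :: v₂) := by simp
    rw [this]
    have h3 := List.isRotated_append (l := u ++ v₁) (l' := j :: v₂)
    have : (j :: v₂) ++ (u ++ v₁) = j :: (v₂ ++ u ++ v₁) := by simp
    rwa [this] at h3
  exact hr.trans h2

lemma lift_mem1 {a : List ℕ} {i j : ℕ} {w : List ℕ} {A : Finset ℕ} (hnd : a.Nodup)
    (hrot : a ~r (i :: j :: w)) (hA : IsArc (j :: w) A) (hj : j ∈ A) :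
    IsArc a (insert i A) := by
  obtain ⟨u, v, hr, rfl⟩ := isArc_iff.mp hA
  have hnjw : (j :: w).Nodup := ((hrot.nodup_iff.mp hnd) : (i :: j :: w).Nodup).of_cons
  obtain ⟨u₁, u₂, rfl, hw⟩ := decomp_mem hnjw hr (by simpa using hj)
  rw [isArc_iff]
  refine ⟨u₁ ++ i :: j :: u₂, v, ?_, ?_⟩
  · have e1 : i :: j :: w = ((i :: j :: u₂) ++ v) ++ u₁ := by rw [hw]; simp
    rw [e1] at hrot
    have := hrot.trans (List.isRotated_append (l := (i :: j :: u₂) ++ v) (l' := u₁))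
    have e2 : u₁ ++ ((i :: j :: u₂) ++ v) = (u₁ ++ i :: j :: u₂) ++ v := by simp
    rwa [e2] at this
  · ext y; simp

lemma lift_notmem1 {a : List ℕ} {i j : ℕ} {w : List ℕ} {A : Finset ℕ} (hnd : a.Nodup)
    (hrot : a ~r (i :: j :: w)) (hA : IsArc (j :: w) A) (hj : j ∉ A) :
    IsArc a A := by
  obtain ⟨u, v, hr, rfl⟩ := isArc_iff.mp hA
  have hnjw : (j :: w).Nodup := ((hrot.nodup_iff.mp hnd) : (i :: j :: w).Nodup).of_cons
  have hjv : j ∈ v := by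
    have : j ∈ u ++ v := hr.perm.mem_iff.mp (List.mem_cons_self (a := j) (l := w))
    rcases List.mem_append.mp this with h | h
    · exact absurd (List.mem_toFinset.mpr h) hj
    · exact h
  obtain ⟨v₁, v₂, rfl, hw⟩ := decomp_notmem hnjw hr hjv
  rw [isArc_iff]
  refine ⟨u, v₁ ++ i :: j :: v₂, ?_, rfl⟩
  have e1 : i :: j :: w = ((i :: j :: v₂) ++ u) ++ v₁ := by rw [hw]; simp
  rw [e1] at hrot
  have h2 := hrot.trans (List.isRotated_append (l := (i :: j :: v₂) ++ u) (l' := v₁))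
  have e2 : v₁ ++ ((i :: j :: v₂) ++ u) = (v₁ ++ i :: j :: v₂) ++ u := by simp
  rw [e2] at h2
  exact h2.trans (List.isRotated_append (l := v₁ ++ i :: j :: v₂) (l' := u))

lemma lift_mem2 {a : List ℕ} {i j : ℕ} {w : List ℕ} {A : Finset ℕ} (hnd : a.Nodup)
    (hrot : a ~r (j :: i :: w)) (hA : IsArc (j :: w) A) (hj : j ∈ A) :
    IsArc a (insert i A) := by
  obtain ⟨u, v, hr, rfl⟩ := isArc_iff.mp hA
  have hnjw : (j :: w).Nodup := by
    have h1 : (j :: i :: w).Nodup := hrot.nodup_iff.mp hnd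
    simp only [List.nodup_cons, List.mem_cons] at h1 ⊢
    tauto
  obtain ⟨u₁, u₂, rfl, hw⟩ := decomp_mem hnjw hr (by simpa using hj)
  rw [isArc_iff]
  refine ⟨u₁ ++ j :: i :: u₂, v, ?_, ?_⟩
  · have e1 : j :: i :: w = ((j :: i :: u₂) ++ v) ++ u₁ := by rw [hw]; simp
    rw [e1] at hrot
    have := hrot.trans (List.isRotated_append (l := (j :: i :: u₂) ++ v) (l' := u₁))
    have e2 : u₁ ++ ((j :: i :: u₂) ++ v) = (u₁ ++ j :: i :: u₂) ++ v := by simp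
    rwa [e2] at this
  · ext y; simp; tauto

lemma lift_notmem2 {a : List ℕ} {i j : ℕ} {w : List ℕ} {A : Finset ℕ} (hnd : a.Nodup)
    (hrot : a ~r (j :: i :: w)) (hA : IsArc (j :: w) A) (hj : j ∉ A) :
    IsArc a A := by
  obtain ⟨u, v, hr, rfl⟩ := isArc_iff.mp hA
  have hnjw : (j :: w).Nodup := by
    have h1 : (j :: i :: w).Nodup := hrot.nodup_iff.mp hnd
    simp only [List.nodup_cons, List.mem_cons] at h1 ⊢
    tauto
  have hjv : j ∈ v := by
    have : j ∈ u ++ v := hr.perm.mem_iff.mp (List.mem_cons_self (a := j) (l := w))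
    rcases List.mem_append.mp this with h | h
    · exact absurd (List.mem_toFinset.mpr h) hj
    · exact h
  obtain ⟨v₁, v₂, rfl, hw⟩ := decomp_notmem hnjw hr hjv
  rw [isArc_iff]
  refine ⟨u, v₁ ++ j :: i :: v₂, ?_, rfl⟩
  have e1 : j :: i :: w = ((j :: i :: v₂) ++ u) ++ v₁ := by rw [hw]; simp
  rw [e1] at hrot
  have h2 := hrot.trans (List.isRotated_append (l := (j :: i :: v₂) ++ u) (l' := v₁))
  have e2 : v₁ ++ ((j :: i :: v₂) ++ u) = (v₁ ++ j :: i :: v₂) ++ u := by simp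
  rw [e2] at h2
  exact h2.trans (List.isRotated_append (l := v₁ ++ j :: i :: v₂) (l' := u))

lemma compl_compl' {L B : Finset ℕ} (h : B ⊆ L) : L \ (L \ B) = B := by
  ext y
  simp only [Finset.mem_sdiff]
  constructor
  · tauto
  · intro hy; exact ⟨h hy, fun hc => hc.2 hy⟩

lemma inter_compl_empty (A L : Finset ℕ) : A ∩ (L \ A) = ∅ := by
  ext y; simp only [Finset.mem_inter, Finset.mem_sdiff, Finset.notMem_empty, iff_false]
  tauto

lemma erase_sdiff_erase (x : ℕ) (L B : Finset ℕ) :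
    (L.erase x) \ (B.erase x) = (L \ B).erase x := by
  ext y
  simp only [Finset.mem_sdiff, Finset.mem_erase]
  tauto

lemma compat_erase {L A B : Finset ℕ} (x : ℕ)
    (h : A ⊆ B ∨ B ⊆ A ∨ A ∩ B = ∅ ∨ L ⊆ A ∪ B) :
    A.erase x ⊆ B.erase x ∨ B.erase x ⊆ A.erase x ∨ A.erase x ∩ B.erase x = ∅ ∨
      L.erase x ⊆ A.erase x ∪ B.erase x := by
  rcases h with h | h | h | h
  · exact Or.inl (Finset.erase_subset_erase x h)
  · exact Or.inr (Or.inl (Finset.erase_subset_erase x h))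
  · refine Or.inr (Or.inr (Or.inl ?_))
    rw [← Finset.subset_empty, ← h]
    intro y hy
    simp only [Finset.mem_inter, Finset.mem_erase] at hy ⊢
    tauto
  · refine Or.inr (Or.inr (Or.inr ?_))
    intro y hy
    simp only [Finset.mem_erase] at hy
    have := h hy.2
    simp only [Finset.mem_union, Finset.mem_erase] at this ⊢
    tauto

lemma dich {L : Finset ℕ} {T : Finset (Finset ℕ)}
    (h1 : ∀ A ∈ T, A ⊆ L ∧ 2 ≤ A.card ∧ A.card + 2 ≤ L.card)
    (h2 : ∀ A ∈ T, L \ A ∈ T)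
    (h3 : ∀ A ∈ T, ∀ B ∈ T, A ⊆ B ∨ B ⊆ A ∨ A ∩ B = ∅ ∨ L ⊆ A ∪ B)
    {A : Finset ℕ} (hA : A ∈ T) (hmin : ∀ B ∈ T, A.card ≤ B.card) :
    ∀ B ∈ T, A ⊆ B ∨ A ∩ B = ∅ := by
  intro B hB
  rcases h3 A hA B hB with h | h | h | h
  · exact Or.inl h
  · have : B = A := Finset.eq_of_subset_of_card_le h (hmin B hB)
    subst this; exact Or.inl subset_rfl
  · exact Or.inr h
  · have hLB : L \ B ⊆ A := by
      intro y hy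
      rcases Finset.mem_sdiff.mp hy with ⟨hyL, hyB⟩
      rcases Finset.mem_union.mp (h hyL) with h' | h'
      · exact h'
      · exact absurd h' hyB
    have hEq : L \ B = A := Finset.eq_of_subset_of_card_le hLB (hmin _ (h2 B hB))
    have hBLA : B = L \ A := by
      rw [← hEq, compl_compl' (h1 B hB).1]
    right
    rw [hBLA]
    exact inter_compl_empty A L

lemma injOn_eraseX {T : Finset (Finset ℕ)} {A : Finset ℕ} {x : ℕ}
    (hdich : ∀ B ∈ T, A ⊆ B ∨ A ∩ B = ∅)
    (hA2 : 2 ≤ A.card) (hx : x ∈ A) :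
    Set.InjOn (fun B : Finset ℕ => B.erase x) (↑T : Set (Finset ℕ)) := by
  have key : ∀ B₁ ∈ T, ∀ B₂ ∈ T, x ∈ B₁ → x ∉ B₂ → B₁.erase x ≠ B₂ := by
    intro B₁ hB₁ B₂ hB₂ hx1 hx2 he
    have hAB₁ : A ⊆ B₁ := by
      rcases hdich B₁ hB₁ with h | h
      · exact h
      · exact absurd (Finset.mem_inter.mpr ⟨hx, hx1⟩) (by rw [h]; exact Finset.notMem_empty x)
    obtain ⟨z, hz⟩ : (A.erase x).Nonempty := by
      rw [← Finset.card_pos, Finset.card_erase_of_mem hx]; omega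
    have hzA : z ∈ A := Finset.mem_of_mem_erase hz
    have hzB₂ : z ∈ B₂ := by
      rw [← he]
      exact Finset.mem_erase.mpr ⟨(Finset.mem_erase.mp hz).1, hAB₁ hzA⟩
    rcases hdich B₂ hB₂ with h | h
    · exact hx2 (h hx)
    · exact absurd (Finset.mem_inter.mpr ⟨hzA, hzB₂⟩) (by rw [h]; exact Finset.notMem_empty z)
  intro B₁ hB₁ B₂ hB₂ he
  simp only [Finset.coe_mem, Set.mem_setOf_eq] at he
  by_cases h1 : x ∈ B₁ <;> by_cases h2 : x ∈ B₂
  · ext y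
    rcases eq_or_ne y x with rfl | hyx
    · simp [h1, h2]
    · constructor
      · intro hy
        have : y ∈ B₁.erase x := Finset.mem_erase.mpr ⟨hyx, hy⟩
        rw [he] at this
        exact Finset.mem_of_mem_erase this
      · intro hy
        have : y ∈ B₂.erase x := Finset.mem_erase.mpr ⟨hyx, hy⟩
        rw [← he] at this
        exact Finset.mem_of_mem_erase this
  · exact absurd (by rw [he, Finset.erase_eq_of_notMem h2]) (key B₁ hB₁ B₂ hB₂ h1 h2)
  · exact absurd (by rw [← he, Finset.erase_eq_of_notMem h1]) (key B₂ hB₂ B₁ hB₁ h2 h1)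
  · rw [← Finset.erase_eq_of_notMem h1, ← Finset.erase_eq_of_notMem h2, he]

lemma maxcount (n : ℕ) (L : Finset ℕ) (hL : L.card = n) (T : Finset (Finset ℕ))
    (h1 : ∀ A ∈ T, A ⊆ L ∧ 2 ≤ A.card ∧ A.card + 2 ≤ L.card)
    (h2 : ∀ A ∈ T, L \ A ∈ T)
    (h3 : ∀ A ∈ T, ∀ B ∈ T, A ⊆ B ∨ B ⊆ A ∨ A ∩ B = ∅ ∨ L ⊆ A ∪ B) :
    T.card ≤ 2 * (L.card - 3) := by
  induction n using Nat.strong_induction_on generalizing L T with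
  | _ n IH =>
  rcases Finset.eq_empty_or_nonempty T with rfl | hTne
  · simp
  have hn4 : 4 ≤ L.card := by
    obtain ⟨A₀, hA₀⟩ := hTne
    obtain ⟨-, h2c, h3c⟩ := h1 A₀ hA₀
    by_contra hc
    push_neg at hc
    interval_cases hcard : L.card <;> omega
  obtain ⟨A, hA, hmin⟩ := Finset.exists_min_image T Finset.card hTne
  have hdich := dich h1 h2 h3 hA hmin
  obtain ⟨hAL, hA2, hAub⟩ := h1 A hA
  obtain ⟨x, hx⟩ : A.Nonempty := Finset.card_pos.mp (by omega)
  have hxL : x ∈ L := hAL hx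
  have hcompl : L \ A ∈ T := h2 A hA
  have hAne : A ≠ L \ A := by
    intro h
    have : x ∈ L \ A := h ▸ hx
    exact (Finset.mem_sdiff.mp this).2 hx
  set T₃ : Finset (Finset ℕ) := (T.erase A).erase (L \ A) with hT₃
  have hT₃sub : T₃ ⊆ T := (Finset.erase_subset _ _).trans (Finset.erase_subset _ _)
  have hmemT₃ : ∀ B, B ∈ T₃ ↔ B ∈ T ∧ B ≠ A ∧ B ≠ L \ A := by
    intro B
    simp only [hT₃, Finset.mem_erase]
    tauto
  have hcardT₃ : T₃.card = T.card - 2 := by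
    rw [hT₃, Finset.card_erase_of_mem, Finset.card_erase_of_mem hA]
    · have : 1 ≤ T.card := Finset.card_pos.mpr hTne
      omega
    · exact Finset.mem_erase.mpr ⟨(Ne.symm hAne), hcompl⟩
  set T₂ : Finset (Finset ℕ) := T₃.image (fun B => B.erase x) with hT₂
  have hinj : Set.InjOn (fun B : Finset ℕ => B.erase x) (↑T₃ : Set (Finset ℕ)) :=
    (injOn_eraseX hdich hA2 hx).mono (by exact_mod_cast hT₃sub)
  have hcardT₂ : T₂.card = T.card - 2 := by
    rw [hT₂, Finset.card_image_of_injOn hinj, hcardT₃]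
  -- facts about members of T₃
  have hfacts : ∀ B ∈ T₃, (B.erase x ⊆ L.erase x ∧ 2 ≤ (B.erase x).card ∧
      (B.erase x).card + 2 ≤ (L.erase x).card) := by
    intro B hB₃
    obtain ⟨hB, hBA, hBLA⟩ := (hmemT₃ B).mp hB₃
    obtain ⟨hBL, hB2, hBub⟩ := h1 B hB
    have hLcard : (L.erase x).card = L.card - 1 := Finset.card_erase_of_mem hxL
    by_cases hxB : x ∈ B
    · have hAB : A ⊆ B := by
        rcases hdich B hB with h | h
        · exact h
        · exact absurd (Finset.mem_inter.mpr ⟨hx, hxB⟩) (by rw [h]; exact Finset.notMem_empty x)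
      have hss : A ⊂ B := Finset.ssubset_iff_subset_ne.mpr ⟨hAB, fun h => hBA h.symm⟩
      have hB3 : 3 ≤ B.card := by
        have := Finset.card_lt_card hss
        omega
      have hBe : (B.erase x).card = B.card - 1 := Finset.card_erase_of_mem hxB
      exact ⟨Finset.erase_subset_erase x hBL, by omega, by omega⟩
    · have hBe : B.erase x = B := Finset.erase_eq_of_notMem hxB
      have hxLB : x ∈ L \ B := Finset.mem_sdiff.mpr ⟨hxL, hxB⟩
      have hALB : A ⊆ L \ B := by
        rcases hdich (L \ B) (h2 B hB) with h | h
        · exact h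
        · exact absurd (Finset.mem_inter.mpr ⟨hx, hxLB⟩)
            (by rw [h]; exact Finset.notMem_empty x)
      have hLBA : L \ B ≠ A := by
        intro h
        apply hBLA
        rw [← h, compl_compl' hBL]
      have hss : A ⊂ L \ B := Finset.ssubset_iff_subset_ne.mpr ⟨hALB, fun h => hLBA h.symm⟩
      have h3LB : 3 ≤ (L \ B).card := by
        have := Finset.card_lt_card hss
        omega
      have hLB : (L \ B).card = L.card - B.card := Finset.card_sdiff_of_subset hBL
      rw [hBe]
      refine ⟨Finset.subset_erase.mpr ⟨hBL, hxB⟩, hB2, by omega⟩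
  have h1' : ∀ B' ∈ T₂, B' ⊆ L.erase x ∧ 2 ≤ B'.card ∧ B'.card + 2 ≤ (L.erase x).card := by
    intro B' hB'
    obtain ⟨B, hB, rfl⟩ := Finset.mem_image.mp hB'
    exact hfacts B hB
  have h2' : ∀ B' ∈ T₂, (L.erase x) \ B' ∈ T₂ := by
    intro B' hB'
    obtain ⟨B, hB₃, rfl⟩ := Finset.mem_image.mp hB'
    obtain ⟨hB, hBA, hBLA⟩ := (hmemT₃ B).mp hB₃
    obtain ⟨hBL, -, -⟩ := h1 B hB
    rw [erase_sdiff_erase]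
    apply Finset.mem_image.mpr
    refine ⟨L \ B, (hmemT₃ _).mpr ⟨h2 B hB, ?_, ?_⟩, rfl⟩
    · intro h
      exact hBLA (by rw [← compl_compl' hBL, h])
    · intro h
      exact hBA (by
        have := congrArg (fun s => L \ s) h
        simpa [compl_compl' hBL, compl_compl' hAL] using this)
  have h3' : ∀ B₁' ∈ T₂, ∀ B₂' ∈ T₂, B₁' ⊆ B₂' ∨ B₂' ⊆ B₁' ∨ B₁' ∩ B₂' = ∅ ∨
      (L.erase x) ⊆ B₁' ∪ B₂' := by
    intro B₁' hB₁' B₂' hB₂'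
    obtain ⟨B₁, hB₁, rfl⟩ := Finset.mem_image.mp hB₁'
    obtain ⟨B₂, hB₂, rfl⟩ := Finset.mem_image.mp hB₂'
    exact compat_erase x (h3 B₁ (hT₃sub hB₁) B₂ (hT₃sub hB₂))
  have hLe : (L.erase x).card = L.card - 1 := Finset.card_erase_of_mem hxL
  have hIH := IH (n - 1) (by omega) (L.erase x) (by omega) T₂ h1' h2' h3'
  rw [hLe] at hIH
  omega

lemma exists_two_split (L : Finset ℕ) (T : Finset (Finset ℕ))
    (h1 : ∀ A ∈ T, A ⊆ L ∧ 2 ≤ A.card ∧ A.card + 2 ≤ L.card)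
    (h2 : ∀ A ∈ T, L \ A ∈ T)
    (h3 : ∀ A ∈ T, ∀ B ∈ T, A ⊆ B ∨ B ⊆ A ∨ A ∩ B = ∅ ∨ L ⊆ A ∪ B)
    (hcard : T.card = 2 * (L.card - 3)) (h4 : 4 ≤ L.card) :
    ∃ A ∈ T, A.card = 2 := by
  have hTne : T.Nonempty := by
    rw [← Finset.card_pos, hcard]; omega
  obtain ⟨A, hA, hmin⟩ := Finset.exists_min_image T Finset.card hTne
  obtain ⟨hAL, hA2, hAub⟩ := h1 A hA
  rcases eq_or_ne A.card 2 with h | h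
  · exact ⟨A, hA, h⟩
  exfalso
  have hA3 : 3 ≤ A.card := by omega
  have hdich := dich h1 h2 h3 hA hmin
  obtain ⟨x, hx⟩ : A.Nonempty := Finset.card_pos.mp (by omega)
  have hxL : x ∈ L := hAL hx
  set T₂ : Finset (Finset ℕ) := T.image (fun B => B.erase x) with hT₂
  have hinj : Set.InjOn (fun B : Finset ℕ => B.erase x) (↑T : Set (Finset ℕ)) :=
    injOn_eraseX hdich hA2 hx
  have hcardT₂ : T₂.card = T.card := Finset.card_image_of_injOn hinj
  have hLe : (L.erase x).card = L.card - 1 := Finset.card_erase_of_mem hxL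
  have hfacts : ∀ B ∈ T, (B.erase x ⊆ L.erase x ∧ 2 ≤ (B.erase x).card ∧
      (B.erase x).card + 2 ≤ (L.erase x).card) := by
    intro B hB
    obtain ⟨hBL, hB2, hBub⟩ := h1 B hB
    by_cases hxB : x ∈ B
    · have hAB : A ⊆ B := by
        rcases hdich B hB with h' | h'
        · exact h'
        · exact absurd (Finset.mem_inter.mpr ⟨hx, hxB⟩) (by rw [h']; exact Finset.notMem_empty x)
      have hB3 : 3 ≤ B.card := le_trans hA3 (Finset.card_le_card hAB)
      have hBe : (B.erase x).card = B.card - 1 := Finset.card_erase_of_mem hxB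
      exact ⟨Finset.erase_subset_erase x hBL, by omega, by omega⟩
    · have hBe : B.erase x = B := Finset.erase_eq_of_notMem hxB
      have hxLB : x ∈ L \ B := Finset.mem_sdiff.mpr ⟨hxL, hxB⟩
      have hALB : A ⊆ L \ B := by
        rcases hdich (L \ B) (h2 B hB) with h' | h'
        · exact h'
        · exact absurd (Finset.mem_inter.mpr ⟨hx, hxLB⟩)
            (by rw [h']; exact Finset.notMem_empty x)
      have h3LB : 3 ≤ (L \ B).card := le_trans hA3 (Finset.card_le_card hALB)
      have hLB : (L \ B).card = L.card - B.card := Finset.card_sdiff_of_subset hBL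
      rw [hBe]
      exact ⟨Finset.subset_erase.mpr ⟨hBL, hxB⟩, hB2, by omega⟩
  have h1' : ∀ B' ∈ T₂, B' ⊆ L.erase x ∧ 2 ≤ B'.card ∧ B'.card + 2 ≤ (L.erase x).card := by
    intro B' hB'
    obtain ⟨B, hB, rfl⟩ := Finset.mem_image.mp hB'
    exact hfacts B hB
  have h2' : ∀ B' ∈ T₂, (L.erase x) \ B' ∈ T₂ := by
    intro B' hB'
    obtain ⟨B, hB, rfl⟩ := Finset.mem_image.mp hB'
    rw [erase_sdiff_erase]
    exact Finset.mem_image.mpr ⟨L \ B, h2 B hB, rfl⟩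
  have h3' : ∀ B₁' ∈ T₂, ∀ B₂' ∈ T₂, B₁' ⊆ B₂' ∨ B₂' ⊆ B₁' ∨ B₁' ∩ B₂' = ∅ ∨
      (L.erase x) ⊆ B₁' ∪ B₂' := by
    intro B₁' hB₁' B₂' hB₂'
    obtain ⟨B₁, hB₁, rfl⟩ := Finset.mem_image.mp hB₁'
    obtain ⟨B₂, hB₂, rfl⟩ := Finset.mem_image.mp hB₂'
    exact compat_erase x (h3 B₁ hB₁ B₂ hB₂)
  have := maxcount (L.erase x).card (L.erase x) rfl T₂ h1' h2' h3'
  rw [hLe] at this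
  omega

-- ===== Part 5: arc lemmas tied to AdjPair, forward and backward steps =====

lemma arc_of_adj {a : List ℕ} {i j : ℕ} (hij : i ≠ j) (hadj : AdjPair a i j)
    (hlen : 2 ≤ a.length) : IsArc a {i, j} := by
  obtain ⟨w, hw⟩ := adjPair_rot hlen hadj
  rw [isArc_iff]
  rcases hw with hr | hr
  · exact ⟨[i, j], w, hr, by simp⟩
  · refine ⟨[j, i], w, hr, ?_⟩
    ext y; simp; tauto

lemma erase_rot_cons {a : List ℕ} {i j : ℕ} {w : List ℕ} (hnd : a.Nodup) (hij : i ≠ j)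
    (hw : a ~r (i :: j :: w) ∨ a ~r (j :: i :: w)) : a.erase i ~r (j :: w) := by
  rcases hw with hr | hr
  · have := erase_rotated i hnd hr
    rwa [List.erase_cons_head] at this
  · have := erase_rotated i hnd hr
    have he : (j :: i :: w).erase i = j :: w := by
      rw [List.erase_cons_tail]
      · rw [List.erase_cons_head]
      · simp [beq_iff_eq, hij.symm]
    rwa [he] at this

lemma arc_lift {a : List ℕ} {i j : ℕ} (hnd : a.Nodup) (hij : i ≠ j) (hadj : AdjPair a i j)
    (hlen : 2 ≤ a.length) {A : Finset ℕ} (hA : IsArc (a.erase i) A) :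
    IsArc a (if j ∈ A then insert i A else A) := by
  obtain ⟨w, hw⟩ := adjPair_rot hlen hadj
  have her : a.erase i ~r (j :: w) := erase_rot_cons hnd hij hw
  have hA' : IsArc (j :: w) A := IsRotated.isArc her hA
  rcases hw with hr | hr
  · by_cases hj : j ∈ A
    · simpa [hj] using lift_mem1 hnd hr hA' hj
    · simpa [hj] using lift_notmem1 hnd hr hA' hj
  · by_cases hj : j ∈ A
    · simpa [hj] using lift_mem2 hnd hr hA' hj
    · simpa [hj] using lift_notmem2 hnd hr hA' hj

lemma forward_step {n : ℕ} (hn4 : 4 ≤ n) {L : Finset ℕ} (hL : L.card = n)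
    {a b : List ℕ} (ha : IsOrdering L a) (hb : IsOrdering L b)
    (hC : Compatible L a b) :
    ∃ i j : ℕ, i ≠ j ∧ AdjPair a i j ∧ AdjPair b i j ∧
      Compatible (L.erase i) (a.erase i) (b.erase i) := by
  obtain ⟨T, ⟨h1, h2, h3, h4⟩, pa, pb⟩ := hC
  have hn4' : 4 ≤ L.card := by omega
  obtain ⟨A, hA, hA2⟩ := exists_two_split L T h1 h2 h3 h4 hn4'
  obtain ⟨i, j, hij, rfl⟩ := Finset.card_eq_two.mp hA2
  refine ⟨i, j, hij, isArc_pair_adjPair ha.1 hij (pa _ hA),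
    isArc_pair_adjPair hb.1 hij (pb _ hA), ?_⟩
  set A : Finset ℕ := {i, j} with hAdef
  have hmin : ∀ B ∈ T, A.card ≤ B.card := fun B hB => by
    rw [hA2]; exact (h1 B hB).2.1
  have hdich := dich h1 h2 h3 hA hmin
  obtain ⟨hAL, hA2', hAub⟩ := h1 A hA
  have hx : i ∈ A := Finset.mem_insert_self i {j}
  have hxL : i ∈ L := hAL hx
  have hcompl : L \ A ∈ T := h2 A hA
  have hAne : A ≠ L \ A := by
    intro h
    have : i ∈ L \ A := h ▸ hx
    exact (Finset.mem_sdiff.mp this).2 hx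
  set T₃ : Finset (Finset ℕ) := (T.erase A).erase (L \ A) with hT₃
  have hT₃sub : T₃ ⊆ T := (Finset.erase_subset _ _).trans (Finset.erase_subset _ _)
  have hmemT₃ : ∀ B, B ∈ T₃ ↔ B ∈ T ∧ B ≠ A ∧ B ≠ L \ A := by
    intro B
    simp only [hT₃, Finset.mem_erase]
    tauto
  have hcardT₃ : T₃.card = T.card - 2 := by
    rw [hT₃, Finset.card_erase_of_mem, Finset.card_erase_of_mem hA]
    · have : 1 ≤ T.card := Finset.card_pos.mpr ⟨A, hA⟩
      omega
    · exact Finset.mem_erase.mpr ⟨(Ne.symm hAne), hcompl⟩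
  set T₂ : Finset (Finset ℕ) := T₃.image (fun B => B.erase i) with hT₂
  have hinj : Set.InjOn (fun B : Finset ℕ => B.erase i) (↑T₃ : Set (Finset ℕ)) :=
    (injOn_eraseX hdich hA2' hx).mono (by exact_mod_cast hT₃sub)
  have hcardT₂ : T₂.card = T.card - 2 := by
    rw [hT₂, Finset.card_image_of_injOn hinj, hcardT₃]
  have hfacts : ∀ B ∈ T₃, (B.erase i ⊆ L.erase i ∧ 2 ≤ (B.erase i).card ∧
      (B.erase i).card + 2 ≤ (L.erase i).card) := by
    intro B hB₃
    obtain ⟨hB, hBA, hBLA⟩ := (hmemT₃ B).mp hB₃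
    obtain ⟨hBL, hB2, hBub⟩ := h1 B hB
    have hLcard : (L.erase i).card = L.card - 1 := Finset.card_erase_of_mem hxL
    by_cases hxB : i ∈ B
    · have hAB : A ⊆ B := by
        rcases hdich B hB with h | h
        · exact h
        · exact absurd (Finset.mem_inter.mpr ⟨hx, hxB⟩) (by rw [h]; exact Finset.notMem_empty i)
      have hss : A ⊂ B := Finset.ssubset_iff_subset_ne.mpr ⟨hAB, fun h => hBA h.symm⟩
      have hB3 : 3 ≤ B.card := by
        have := Finset.card_lt_card hss
        omega
      have hBe : (B.erase i).card = B.card - 1 := Finset.card_erase_of_mem hxB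
      exact ⟨Finset.erase_subset_erase i hBL, by omega, by omega⟩
    · have hBe : B.erase i = B := Finset.erase_eq_of_notMem hxB
      have hxLB : i ∈ L \ B := Finset.mem_sdiff.mpr ⟨hxL, hxB⟩
      have hALB : A ⊆ L \ B := by
        rcases hdich (L \ B) (h2 B hB) with h | h
        · exact h
        · exact absurd (Finset.mem_inter.mpr ⟨hx, hxLB⟩)
            (by rw [h]; exact Finset.notMem_empty i)
      have hLBA : L \ B ≠ A := by
        intro h
        apply hBLA
        rw [← h, compl_compl' hBL]
      have hss : A ⊂ L \ B := Finset.ssubset_iff_subset_ne.mpr ⟨hALB, fun h => hLBA h.symm⟩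
      have h3LB : 3 ≤ (L \ B).card := by
        have := Finset.card_lt_card hss
        omega
      have hLB : (L \ B).card = L.card - B.card := Finset.card_sdiff_of_subset hBL
      rw [hBe]
      exact ⟨Finset.subset_erase.mpr ⟨hBL, hxB⟩, hB2, by omega⟩
  have h1' : ∀ B' ∈ T₂, B' ⊆ L.erase i ∧ 2 ≤ B'.card ∧ B'.card + 2 ≤ (L.erase i).card := by
    intro B' hB'
    obtain ⟨B, hB, rfl⟩ := Finset.mem_image.mp hB'
    exact hfacts B hB
  have h2' : ∀ B' ∈ T₂, (L.erase i) \ B' ∈ T₂ := by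
    intro B' hB'
    obtain ⟨B, hB₃, rfl⟩ := Finset.mem_image.mp hB'
    obtain ⟨hB, hBA, hBLA⟩ := (hmemT₃ B).mp hB₃
    obtain ⟨hBL, -, -⟩ := h1 B hB
    rw [erase_sdiff_erase]
    apply Finset.mem_image.mpr
    refine ⟨L \ B, (hmemT₃ _).mpr ⟨h2 B hB, ?_, ?_⟩, rfl⟩
    · intro h
      exact hBLA (by rw [← compl_compl' hBL, h])
    · intro h
      exact hBA (by
        have := congrArg (fun s => L \ s) h
        simpa [compl_compl' hBL, compl_compl' hAL] using this)
  have h3' : ∀ B₁' ∈ T₂, ∀ B₂' ∈ T₂, B₁' ⊆ B₂' ∨ B₂' ⊆ B₁' ∨ B₁' ∩ B₂' = ∅ ∨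
      (L.erase i) ⊆ B₁' ∪ B₂' := by
    intro B₁' hB₁' B₂' hB₂'
    obtain ⟨B₁, hB₁, rfl⟩ := Finset.mem_image.mp hB₁'
    obtain ⟨B₂, hB₂, rfl⟩ := Finset.mem_image.mp hB₂'
    exact compat_erase i (h3 B₁ (hT₃sub hB₁) B₂ (hT₃sub hB₂))
  have hLe : (L.erase i).card = L.card - 1 := Finset.card_erase_of_mem hxL
  have h4' : T₂.card = 2 * ((L.erase i).card - 3) := by
    rw [hLe, hcardT₂, h4]
    omega
  refine ⟨T₂, ⟨h1', h2', h3', h4'⟩, ?_, ?_⟩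
  · intro B' hB'
    obtain ⟨B, hB₃, rfl⟩ := Finset.mem_image.mp hB'
    exact isArc_erase_s11 ha.1 i (pa B (hT₃sub hB₃))
  · intro B' hB'
    obtain ⟨B, hB₃, rfl⟩ := Finset.mem_image.mp hB'
    exact isArc_erase_s11 hb.1 i (pb B (hT₃sub hB₃))

-- ===== Part 6: backward step =====

lemma compat_symm {L S₁ S₂ : Finset ℕ}
    (h : S₁ ⊆ S₂ ∨ S₂ ⊆ S₁ ∨ S₁ ∩ S₂ = ∅ ∨ L ⊆ S₁ ∪ S₂) :
    S₂ ⊆ S₁ ∨ S₁ ⊆ S₂ ∨ S₂ ∩ S₁ = ∅ ∨ L ⊆ S₂ ∪ S₁ := by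
  rcases h with h | h | h | h
  · exact Or.inr (Or.inl h)
  · exact Or.inl h
  · exact Or.inr (Or.inr (Or.inl (by rw [Finset.inter_comm]; exact h)))
  · exact Or.inr (Or.inr (Or.inr (by rw [Finset.union_comm]; exact h)))

lemma backward_step {n : ℕ} (hn4 : 4 ≤ n) {L : Finset ℕ} (hL : L.card = n)
    {a b : List ℕ} (ha : IsOrdering L a) (hb : IsOrdering L b)
    {i j : ℕ} (hij : i ≠ j) (hadja : AdjPair a i j) (hadjb : AdjPair b i j)
    (hC : Compatible (L.erase i) (a.erase i) (b.erase i)) :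
    Compatible L a b := by
  obtain ⟨T', ⟨h1', h2', h3', h4'⟩, pa', pb'⟩ := hC
  have hlena : a.length = n := by
    rw [← List.toFinset_card_of_nodup ha.1, ha.2, hL]
  have hlenb : b.length = n := by
    rw [← List.toFinset_card_of_nodup hb.1, hb.2, hL]
  have hiL : i ∈ L := by
    obtain ⟨w, hw⟩ := adjPair_rot (by omega) hadja
    have : i ∈ a := by
      rcases hw with hr | hr <;> exact hr.perm.symm.mem_iff.mp (by simp)
    rw [← ha.2]; exact List.mem_toFinset.mpr this
  have hjL : j ∈ L := by
    obtain ⟨w, hw⟩ := adjPair_rot (by omega) hadja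
    have : j ∈ a := by
      rcases hw with hr | hr <;> exact hr.perm.symm.mem_iff.mp (by simp)
    rw [← ha.2]; exact List.mem_toFinset.mpr this
  set L' : Finset ℕ := L.erase i with hL'def
  have hm : L'.card = n - 1 := by rw [hL'def, Finset.card_erase_of_mem hiL, hL]
  have hsubL' : ∀ A ∈ T', A ⊆ L' ∧ 2 ≤ A.card ∧ A.card + 2 ≤ L'.card := h1'
  have hiA : ∀ A ∈ T', i ∉ A := by
    intro A hA hmem
    exact (Finset.mem_erase.mp ((hsubL' A hA).1 hmem)).1 rfl
  have hjL' : j ∈ L' := Finset.mem_erase.mpr ⟨hij.symm, hjL⟩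
  set f : Finset ℕ → Finset ℕ := fun A => if j ∈ A then insert i A else A with hfdef
  set pair : Finset ℕ := {i, j} with hpairdef
  have hpaircard : pair.card = 2 := Finset.card_pair hij
  have hpairL : pair ⊆ L := by
    rw [hpairdef]
    intro y hy
    rcases Finset.mem_insert.mp hy with rfl | hy
    · exact hiL
    · rw [Finset.mem_singleton.mp hy]; exact hjL
  have hcopaircard : (L \ pair).card = n - 2 := by
    rw [Finset.card_sdiff_of_subset hpairL, hpaircard, hL]
  have hinotco : i ∉ L \ pair := by
    intro h
    exact (Finset.mem_sdiff.mp h).2 (Finset.mem_insert_self i {j})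
  set T : Finset (Finset ℕ) := insert pair (insert (L \ pair) (T'.image f)) with hTdef
  have hmemT : ∀ S, S ∈ T ↔ S = pair ∨ S = L \ pair ∨ ∃ A ∈ T', f A = S := by
    intro S
    simp only [hTdef, Finset.mem_insert, Finset.mem_image]
  -- cards of f A
  have hfcard : ∀ A ∈ T', (j ∈ A → (f A).card = A.card + 1) ∧ (j ∉ A → f A = A) := by
    intro A hA
    constructor
    · intro hj
      simp only [hfdef]
      simp only [hj, if_true]
      exact Finset.card_insert_of_notMem (hiA A hA)
    · intro hj
      simp only [hfdef]
      simp only [hj, if_false]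
  have hfiL : ∀ A ∈ T', f A ⊆ L := by
    intro A hA
    have hAL : A ⊆ L := ((hsubL' A hA).1).trans (Finset.erase_subset i L)
    simp only [hfdef]
    by_cases hj : j ∈ A
    · simp only [hj, if_true]
      exact Finset.insert_subset hiL hAL
    · simp only [hj, if_false]
      exact hAL
  -- h1 for T
  have h1 : ∀ S ∈ T, S ⊆ L ∧ 2 ≤ S.card ∧ S.card + 2 ≤ L.card := by
    intro S hS
    rcases (hmemT S).mp hS with rfl | rfl | ⟨A, hA, rfl⟩
    · exact ⟨hpairL, by omega, by omega⟩
    · exact ⟨Finset.sdiff_subset, by omega, by omega⟩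
    · obtain ⟨hAL', hA2, hAub⟩ := hsubL' A hA
      refine ⟨hfiL A hA, ?_, ?_⟩
      · by_cases hj : j ∈ A
        · rw [(hfcard A hA).1 hj]; omega
        · rw [(hfcard A hA).2 hj]; omega
      · by_cases hj : j ∈ A
        · rw [(hfcard A hA).1 hj]; omega
        · rw [(hfcard A hA).2 hj]; omega
  -- complement identity
  have hcomplf : ∀ A ∈ T', L \ f A = f (L' \ A) := by
    intro A hA
    have hiA' := hiA A hA
    by_cases hj : j ∈ A
    · have hjnot : j ∉ L' \ A := fun h => (Finset.mem_sdiff.mp h).2 hj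
      simp only [hfdef]
      simp only [hj, if_true, hjnot, if_false]
      ext y
      simp only [Finset.mem_sdiff, Finset.mem_insert, Finset.mem_erase, hL'def]
      constructor
      · rintro ⟨hyL, hy⟩
        push_neg at hy
        exact ⟨⟨hy.1, hyL⟩, hy.2⟩
      · rintro ⟨⟨hyi, hyL⟩, hyA⟩
        exact ⟨hyL, by push_neg; exact ⟨hyi, hyA⟩⟩
    · have hjin : j ∈ L' \ A := Finset.mem_sdiff.mpr ⟨hjL', hj⟩
      simp only [hfdef]
      simp only [hj, if_false, hjin, if_true]
      ext y
      simp only [Finset.mem_sdiff, Finset.mem_insert, Finset.mem_erase, hL'def]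
      constructor
      · rintro ⟨hyL, hyA⟩
        rcases eq_or_ne y i with rfl | hyi
        · exact Or.inl rfl
        · exact Or.inr ⟨⟨hyi, hyL⟩, hyA⟩
      · rintro (rfl | ⟨⟨hyi, hyL⟩, hyA⟩)
        · exact ⟨hiL, hiA'⟩
        · exact ⟨hyL, hyA⟩
  have h2 : ∀ S ∈ T, L \ S ∈ T := by
    intro S hS
    rcases (hmemT S).mp hS with rfl | rfl | ⟨A, hA, rfl⟩
    · exact (hmemT _).mpr (Or.inr (Or.inl rfl))
    · rw [compl_compl' hpairL]
      exact (hmemT _).mpr (Or.inl rfl)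
    · rw [hcomplf A hA]
      exact (hmemT _).mpr (Or.inr (Or.inr ⟨L' \ A, h2' A hA, rfl⟩))
  -- compat helpers
  have hpair_fA : ∀ A ∈ T', pair ⊆ f A ∨ f A ∩ pair = ∅ := by
    intro A hA
    by_cases hj : j ∈ A
    · left
      simp only [hfdef]; simp only [hj, if_true]
      intro y hy
      rcases Finset.mem_insert.mp hy with rfl | hy
      · exact Finset.mem_insert_self _ _
      · rw [Finset.mem_singleton.mp hy]
        exact Finset.mem_insert_of_mem hj
    · right
      rw [(hfcard A hA).2 hj]
      ext y
      simp only [Finset.mem_inter, Finset.notMem_empty, iff_false, hpairdef,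
        Finset.mem_insert, Finset.mem_singleton]
      rintro ⟨hyA, rfl | rfl⟩
      · exact hiA A hA hyA
      · exact hj hyA
  have hcopair_fA : ∀ A ∈ T', f A ⊆ L \ pair ∨ L ⊆ (L \ pair) ∪ f A := by
    intro A hA
    by_cases hj : j ∈ A
    · right
      intro y hyL
      by_cases hy : y ∈ pair
      · apply Finset.mem_union_right
        simp only [hfdef]; simp only [hj, if_true]
        rcases Finset.mem_insert.mp hy with rfl | hy
        · exact Finset.mem_insert_self _ _
        · rw [Finset.mem_singleton.mp hy]
          exact Finset.mem_insert_of_mem hj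
      · exact Finset.mem_union_left _ (Finset.mem_sdiff.mpr ⟨hyL, hy⟩)
    · left
      rw [(hfcard A hA).2 hj]
      intro y hy
      have hyL' : y ∈ L' := (hsubL' A hA).1 hy
      refine Finset.mem_sdiff.mpr ⟨(Finset.mem_erase.mp hyL').2, ?_⟩
      simp only [hpairdef, Finset.mem_insert, Finset.mem_singleton]
      push_neg
      exact ⟨(Finset.mem_erase.mp hyL').1, fun h => hj (h ▸ hy)⟩
  have hfAfB : ∀ A ∈ T', ∀ B ∈ T', f A ⊆ f B ∨ f B ⊆ f A ∨ f A ∩ f B = ∅ ∨ L ⊆ f A ∪ f B := by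
    intro A hA B hB
    have hsub : ∀ C ∈ T', ∀ D ∈ T', C ⊆ D → f C ⊆ f D := by
      intro C hC D hD hCD
      simp only [hfdef]
      by_cases hjC : j ∈ C
      · simp only [hjC, hCD hjC, if_true]
        exact Finset.insert_subset_insert _ hCD
      · by_cases hjD : j ∈ D
        · simp only [hjC, hjD, if_true, if_false]
          exact hCD.trans (Finset.subset_insert _ _)
        · simp only [hjC, hjD, if_false]
          exact hCD
    rcases h3' A hA B hB with h | h | h | h
    · exact Or.inl (hsub A hA B hB h)
    · exact Or.inr (Or.inl (hsub B hB A hA h))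
    · refine Or.inr (Or.inr (Or.inl ?_))
      ext y
      simp only [Finset.mem_inter, Finset.notMem_empty, iff_false]
      rintro ⟨hyA, hyB⟩
      have hmemf : ∀ C ∈ T', ∀ z, z ∈ f C → z = i ∨ z ∈ C := by
        intro C hC z hz
        simp only [hfdef] at hz
        by_cases hjC : j ∈ C
        · simp only [hjC, if_true] at hz
          exact Finset.mem_insert.mp hz
        · simp only [hjC, if_false] at hz
          exact Or.inr hz
      rcases hmemf A hA y hyA with hyi | hyA'
      · subst hyi
        simp only [hfdef] at hyA hyB
        by_cases hjA : j ∈ A <;> by_cases hjB : j ∈ B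
        · have : j ∈ A ∩ B := Finset.mem_inter.mpr ⟨hjA, hjB⟩
          rw [h] at this
          exact Finset.notMem_empty j this
        · simp only [hjB, if_false] at hyB
          exact hiA B hB hyB
        · simp only [hjA, if_false] at hyA
          exact hiA A hA hyA
        · simp only [hjA, if_false] at hyA
          exact hiA A hA hyA
      · rcases hmemf B hB y hyB with hyi | hyB'
        · subst hyi
          exact hiA A hA hyA'
        · have : y ∈ A ∩ B := Finset.mem_inter.mpr ⟨hyA', hyB'⟩
          rw [h] at this
          exact Finset.notMem_empty y this
    · refine Or.inr (Or.inr (Or.inr ?_))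
      have hjAB : j ∈ A ∨ j ∈ B := by
        rcases Finset.mem_union.mp (h hjL') with h' | h'
        · exact Or.inl h'
        · exact Or.inr h'
      intro y hyL
      rcases eq_or_ne y i with rfl | hyi
      · rcases hjAB with hj | hj
        · apply Finset.mem_union_left
          simp only [hfdef]; simp only [hj, if_true]
          exact Finset.mem_insert_self _ _
        · apply Finset.mem_union_right
          simp only [hfdef]; simp only [hj, if_true]
          exact Finset.mem_insert_self _ _
      · have : y ∈ L' := Finset.mem_erase.mpr ⟨hyi, hyL⟩
        rcases Finset.mem_union.mp (h this) with h' | h'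
        · apply Finset.mem_union_left
          simp only [hfdef]
          by_cases hj : j ∈ A
          · simp only [hj, if_true]; exact Finset.mem_insert_of_mem h'
          · simp only [hj, if_false]; exact h'
        · apply Finset.mem_union_right
          simp only [hfdef]
          by_cases hj : j ∈ B
          · simp only [hj, if_true]; exact Finset.mem_insert_of_mem h'
          · simp only [hj, if_false]; exact h'
  have h3 : ∀ S₁ ∈ T, ∀ S₂ ∈ T, S₁ ⊆ S₂ ∨ S₂ ⊆ S₁ ∨ S₁ ∩ S₂ = ∅ ∨ L ⊆ S₁ ∪ S₂ := by
    intro S₁ hS₁ S₂ hS₂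
    rcases (hmemT S₁).mp hS₁ with rfl | rfl | ⟨A, hA, rfl⟩ <;>
      rcases (hmemT S₂).mp hS₂ with rfl | rfl | ⟨B, hB, rfl⟩
    · exact Or.inl subset_rfl
    · exact Or.inr (Or.inr (Or.inl (inter_compl_empty pair L)))
    · rcases hpair_fA B hB with h | h
      · exact Or.inl h
      · exact compat_symm (Or.inr (Or.inr (Or.inl h)))
    · exact compat_symm (Or.inr (Or.inr (Or.inl (inter_compl_empty pair L))))
    · exact Or.inl subset_rfl
    · rcases hcopair_fA B hB with h | h
      · exact Or.inr (Or.inl h)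
      · exact Or.inr (Or.inr (Or.inr h))
    · rcases hpair_fA A hA with h | h
      · exact Or.inr (Or.inl h)
      · exact Or.inr (Or.inr (Or.inl h))
    · rcases hcopair_fA A hA with h | h
      · exact Or.inl h
      · exact Or.inr (Or.inr (Or.inr (by rw [Finset.union_comm]; exact h)))
    · exact hfAfB A hA B hB
  -- cardinality
  have hinjf : Set.InjOn f (↑T' : Set (Finset ℕ)) := by
    intro A₁ hA₁ A₂ hA₂ he
    simp only [Finset.mem_coe] at hA₁ hA₂
    simp only [hfdef] at he
    by_cases hj1 : j ∈ A₁ <;> by_cases hj2 : j ∈ A₂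
    · simp only [hj1, hj2, if_true] at he
      rw [← Finset.erase_insert (hiA A₁ hA₁), ← Finset.erase_insert (hiA A₂ hA₂), he]
    · simp only [hj1, hj2, if_true, if_false] at he
      exact absurd (he ▸ Finset.mem_insert_self i A₁) (hiA A₂ hA₂)
    · simp only [hj1, hj2, if_true, if_false] at he
      exact absurd (he ▸ Finset.mem_insert_self i A₂) (hiA A₁ hA₁)
    · simp only [hj1, hj2, if_false] at he
      exact he
  have hpair_notmem : pair ∉ T'.image f := by
    intro h
    obtain ⟨A, hA, he⟩ := Finset.mem_image.mp h
    by_cases hj : j ∈ A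
    · have := (hfcard A hA).1 hj
      have h2A := (hsubL' A hA).2.1
      have : pair.card = A.card + 1 := by rw [← he, this]
      omega
    · rw [(hfcard A hA).2 hj] at he
      have : j ∈ A := by
        rw [he]; exact Finset.mem_insert_of_mem (Finset.mem_singleton_self j)
      exact hj this
  have hcopair_notmem : L \ pair ∉ T'.image f := by
    intro h
    obtain ⟨A, hA, he⟩ := Finset.mem_image.mp h
    by_cases hj : j ∈ A
    · have hi : i ∈ f A := by
        simp only [hfdef]; simp only [hj, if_true]; exact Finset.mem_insert_self _ _
      rw [he] at hi
      exact hinotco hi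
    · rw [(hfcard A hA).2 hj] at he
      have h2A := (hsubL' A hA).2.2
      have : A.card = n - 2 := by rw [he, hcopaircard]
      omega
  have hpair_ne_copair : pair ≠ L \ pair := by
    intro h
    exact hinotco (h ▸ Finset.mem_insert_self i {j})
  have h4 : T.card = 2 * (L.card - 3) := by
    rw [hTdef, Finset.card_insert_of_notMem, Finset.card_insert_of_notMem hcopair_notmem,
      Finset.card_image_of_injOn hinjf, h4', hm, hL]
    · omega
    · simp only [Finset.mem_insert]
      push_neg
      exact ⟨hpair_ne_copair, hpair_notmem⟩
  -- planarity
  have hplanar : ∀ (c : List ℕ), IsOrdering L c → AdjPair c i j →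
      Planar (c.erase i) T' → Planar c T := by
    intro c hc hadj pc
    have hlenc : c.length = n := by
      rw [← List.toFinset_card_of_nodup hc.1, hc.2, hL]
    intro S hS
    rcases (hmemT S).mp hS with rfl | rfl | ⟨A, hA, rfl⟩
    · exact arc_of_adj hij hadj (by omega)
    · have := isArc_compl hc.1 (arc_of_adj hij hadj (by omega : 2 ≤ c.length))
      rwa [hc.2] at this
    · have := arc_lift hc.1 hij hadj (by omega : 2 ≤ c.length) (pc A hA)
      simp only [hfdef]
      by_cases hj : j ∈ A
      · simpa [hj] using this
      · simpa [hj] using this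
  exact ⟨T, ⟨h1, h2, h3, h4⟩, hplanar a ha hadja pa', hplanar b hb hadjb pb'⟩

end Aux

/-- Two cyclic orderings `a,b` of an `n`-element set share a common planar binary tree
iff `n ≤ 3`, or there is a pair `{i,j}` adjacent in both orderings such that the
orderings obtained by deleting `i` are again compatible (correctness of the recursive
pruning procedure). -/
theorem compatible_iff_pruning (n : ℕ) (hn : 3 ≤ n) (L : Finset ℕ) (hL : L.card = n)
    (a b : List ℕ) (ha : IsOrdering L a) (hb : IsOrdering L b) :
    Compatible L a b ↔
      (n ≤ 3 ∨ ∃ i j : ℕ, i ≠ j ∧ AdjPair a i j ∧ AdjPair b i j ∧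
        Compatible (L.erase i) (a.erase i) (b.erase i)) := by

  by_cases h3n : n ≤ 3
  · have hcard : L.card = 3 := by omega
    constructor
    · intro _; exact Or.inl h3n
    · intro _
      refine ⟨∅, ⟨fun A h => absurd h (Finset.notMem_empty A),
        fun A h => absurd h (Finset.notMem_empty A),
        fun A h => absurd h (Finset.notMem_empty A), by simp [hcard]⟩,
        fun A h => absurd h (Finset.notMem_empty A),
        fun A h => absurd h (Finset.notMem_empty A)⟩
  · have hn4 : 4 ≤ n := by omega
    constructor
    · intro hC
      exact Or.inr (forward_step hn4 hL ha hb hC)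
    · rintro (h | ⟨i, j, hij, hadja, hadjb, hC⟩)
      · exact absurd h (by omega)
      · exact backward_step hn4 hL ha hb hij hadja hadjb hC
end

section
/- Let n ≥ 5 and m = ⌈(n-3)/2⌉ + 1. Let α = (1, ω(2),...,ω(n-2), n-1, n) and β = (1, γ(2),...,γ(m), n, γ(m+1),...,γ(n-2), n-1) be cyclic orderings, where ω, γ are permutations of {2,...,n-2}. If {ω(2),...,ω(m)} ∩ {γ(m+1),...,γ(n-2)} ≠ ∅, then no unrooted binary tree with n leaves is planar with respect to both α and β. -/
open scoped Finset

namespace List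

variable {α : Type*}

theorem IsInfix.infix_or_infix_of_notMem {s u v : List α} {y : α} (hs : s <:+: u ++ y :: v)
    (hy : y ∉ s) : s <:+: u ∨ s <:+: v := by
  obtain ⟨p, q, h⟩ := hs
  rw [List.append_assoc, List.append_eq_append_iff] at h
  rcases h with ⟨a, rfl, h⟩ | ⟨b, rfl, h⟩
  · rw [List.append_eq_append_iff] at h
    rcases h with ⟨c, rfl, -⟩ | ⟨c, rfl, hc⟩
    · exact Or.inl ⟨p, c, by simp⟩
    · rcases List.cons_eq_append_iff.mp hc with ⟨rfl, -⟩ | ⟨c', rfl, -⟩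
      · exact Or.inl ⟨p, [], by simp⟩
      · simp at hy
  · rcases List.cons_eq_append_iff.mp h with ⟨rfl, h'⟩ | ⟨b', rfl, rfl⟩
    · rcases List.cons_eq_append_iff.mp h'.symm with ⟨rfl, -⟩ | ⟨s', rfl, -⟩
      · exact Or.inl List.nil_infix
      · simp at hy
    · exact Or.inr ⟨b', q, by simp⟩

theorem IsInfix.take_subset_of_head_mem {s t : List α} {a : α} (ht : a ∉ t)
    (hs : s <:+: a :: t) (ha : a ∈ s) {k : ℕ} (hk : k ≤ s.length) : (a :: t).take k ⊆ s := by
  have hp := (List.infix_cons_iff.mp hs).resolve_right fun h => ht (h.subset ha)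
  rw [List.prefix_iff_eq_take.mp hp]
  exact (List.take_prefix_take_left hk).subset

theorem take_rotate_infix_append_self (l : List α) (k j : ℕ) :
    (l.rotate k).take j <:+: l ++ l := by
  rw [List.rotate_eq_drop_append_take_mod]
  refine (List.take_prefix _ _).isInfix.trans ⟨l.take (k % l.length), l.drop (k % l.length), ?_⟩
  simp only [List.append_assoc, List.take_append_drop]
  rw [← List.append_assoc, List.take_append_drop]

theorem perm_append_cons_cons (u v : List α) (a b : α) :
    (v ++ b :: a :: u).Perm (a :: (u ++ v ++ [b])) := by
  classical
  rw [List.perm_iff_count]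
  intro c
  simp only [List.count_append, List.count_cons, List.count_nil]
  omega

end List

section Interval

variable {α : Type*} [DecidableEq α]

def IsInterval (t : List α) (X : Finset α) : Prop :=
  ∃ s, s <:+: t ∧ X = s.toFinset

namespace IsInterval

variable {t u v : List α} {X P Q : Finset α} {a b y z : α}

theorem subset_or_subset (h : IsInterval (u ++ y :: v) X) (hy : y ∉ X) :
    X ⊆ u.toFinset ∨ X ⊆ v.toFinset := by
  obtain ⟨s, hs, rfl⟩ := h
  rcases hs.infix_or_infix_of_notMem (by simpa using hy) with h | h
  · exact Or.inl fun z hz => by simpa using h.subset (by simpa using hz)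
  · exact Or.inr fun z hz => by simpa using h.subset (by simpa using hz)

theorem subset_left (h : IsInterval (u ++ y :: v) X) (hy : y ∉ X) (hz : z ∈ X) (hzv : z ∉ v) :
    X ⊆ u.toFinset :=
  (h.subset_or_subset hy).resolve_right fun h' => hzv (List.mem_toFinset.mp (h' hz))

theorem subset_right (h : IsInterval (u ++ y :: v) X) (hy : y ∉ X) (hz : z ∈ X) (hzu : z ∉ u) :
    X ⊆ v.toFinset :=
  (h.subset_or_subset hy).resolve_left fun h' => hzu (List.mem_toFinset.mp (h' hz))

theorem last_notMem (hl : (a :: (t ++ [b])).Nodup) (hP : IsInterval (a :: (t ++ [b])) P)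
    (hPQ : Disjoint P Q) (hcover : P ∪ Q = (a :: (t ++ [b])).toFinset) (hQ : Q.Nonempty)
    (ha : a ∈ P) : b ∉ P := by
  intro hb
  obtain ⟨y, hyQ⟩ := hQ
  have hyP : y ∉ P := Finset.disjoint_right.mp hPQ hyQ
  have hyt : y ∈ t := by
    have hy : y ∈ P ∪ Q := Finset.mem_union_right _ hyQ
    rw [hcover] at hy
    simp only [List.mem_toFinset, List.mem_cons, List.mem_append, List.not_mem_nil, or_false] at hy
    rcases hy with rfl | hy | rfl
    exacts [absurd ha hyP, hy, absurd hb hyP]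
  obtain ⟨p, q, rfl⟩ := List.append_of_mem hyt
  have hd := (List.nodup_append.mp (show ((a :: p) ++ y :: (q ++ [b])).Nodup by simpa using hl)).2.2
  have hP' : IsInterval ((a :: p) ++ y :: (q ++ [b])) P := by simpa using hP
  have hbp := hP'.subset_left hyP ha (fun h => hd a (by simp) a (List.mem_cons_of_mem _ h) rfl) hb
  exact hd b (List.mem_toFinset.mp hbp) b (by simp) rfl

theorem eq_of_cut (hl : (v ++ b :: a :: u).Nodup) (hP : IsInterval (v ++ b :: a :: u) P)
    (hQ : IsInterval (v ++ b :: a :: u) Q) (hPQ : Disjoint P Q)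
    (hcover : P ∪ Q = (v ++ b :: a :: u).toFinset) (ha : a ∈ P) (hb : b ∈ Q) :
    P = (a :: u).toFinset := by
  have hd := (List.nodup_append.mp (show ((v ++ [b]) ++ a :: u).Nodup by simpa using hl)).2.2
  have hPu : P ⊆ (a :: u).toFinset :=
    hP.subset_right (Finset.disjoint_right.mp hPQ hb) ha
      fun hav => hd a (by simp [hav]) a (by simp) rfl
  have hQv : Q ⊆ (v ++ [b]).toFinset :=
    (show IsInterval ((v ++ [b]) ++ a :: u) Q by simpa using hQ).subset_left
      (Finset.disjoint_left.mp hPQ ha) hb fun hbu => hd b (by simp) b (by simp [hbu]) rfl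
  refine hPu.antisymm fun z hz => ?_
  have hz' : z ∈ P ∪ Q := by
    rw [hcover]
    simp only [List.mem_toFinset, List.mem_cons, List.mem_append] at hz ⊢
    tauto
  exact (Finset.mem_union.mp hz').resolve_right fun hzQ =>
    hd z (List.mem_toFinset.mp (hQv hzQ)) z (List.mem_toFinset.mp hz) rfl

theorem take_subset (ht : a ∉ t) (h : IsInterval (a :: t) X) (ha : a ∈ X) {k : ℕ}
    (hk : k ≤ #X) : ((a :: t).take k).toFinset ⊆ X := by
  obtain ⟨s, hs, rfl⟩ := h
  have := hs.take_subset_of_head_mem ht (by simpa using ha) (hk.trans (List.toFinset_card_le _))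
  exact fun z hz => by simpa using this (by simpa using hz)

end IsInterval

end Interval

theorem IsArc.isInterval_of_notMem {u v : List ℕ} {a : ℕ} {A : Finset ℕ}
    (h : IsArc (u ++ a :: v) A) (ha : a ∉ A) : IsInterval (v ++ u) A := by
  obtain ⟨k, j, rfl⟩ := h
  refine ⟨_, ?_, rfl⟩
  have ha' : a ∉ ((u ++ a :: v).rotate k).take j := by simpa using ha
  have hs := List.take_rotate_infix_append_self (u ++ a :: v) k j
  rw [show u ++ a :: v ++ (u ++ a :: v) = u ++ a :: ((v ++ u) ++ a :: v) by simp] at hs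
  rcases hs.infix_or_infix_of_notMem ha' with hs | hs
  · exact hs.trans (List.suffix_append _ _).isInfix
  · rcases hs.infix_or_infix_of_notMem ha' with hs | hs
    · exact hs
    · exact hs.trans (List.prefix_append _ _).isInfix

theorem isArc_singleton {l : List ℕ} {b : ℕ} (hb : b ∈ l) : IsArc l {b} := by
  obtain ⟨k, hk, rfl⟩ := List.mem_iff_getElem.mp hb
  refine ⟨k, 1, ?_⟩
  rw [List.rotate_eq_drop_append_take hk.le, List.drop_eq_getElem_cons hk, List.cons_append,
    List.take_succ_cons, List.take_zero]
  simp

theorem Planar.isInterval {u v : List ℕ} {a : ℕ} {T : Finset (Finset ℕ)} {X : Finset ℕ}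
    (hl : Planar (u ++ a :: v) T) (hX : X ∈ T ∨ #X = 1) (hXl : X ⊆ (v ++ u).toFinset)
    (ha : a ∉ X) : IsInterval (v ++ u) X := by
  refine IsArc.isInterval_of_notMem ?_ ha
  rcases hX with hX | hX
  · exact hl X hX
  · obtain ⟨b, rfl⟩ := Finset.card_eq_one.mp hX
    have hb := List.mem_toFinset.mp (hXl (Finset.mem_singleton_self b))
    exact isArc_singleton (by simp only [List.mem_append, List.mem_cons] at hb ⊢; tauto)

theorem IsOrdering.perm {L : Finset ℕ} {l l' : List ℕ} (h : IsOrdering L l) (hp : l.Perm l') :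
    IsOrdering L l' :=
  ⟨hp.nodup_iff.mp h.1, (List.toFinset_eq_of_perm _ _ hp).symm.trans h.2⟩

theorem IsOrdering.cons_append_pred {n : ℕ} {w : List ℕ}
    (hw : IsOrdering (Finset.Icc 2 (n - 2)) w) (hn : 3 ≤ n) :
    IsOrdering ((Finset.Icc 1 n).erase n) (1 :: (w ++ [n - 1])) := by
  have hw' : ∀ u, u ∈ w ↔ 2 ≤ u ∧ u ≤ n - 2 := fun u => by
    rw [← List.mem_toFinset, hw.2, Finset.mem_Icc]
  refine ⟨?_, ?_⟩
  · simp only [List.nodup_cons, List.nodup_append, List.mem_append, List.mem_singleton, hw',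
      hw.1]
    grind
  · ext u
    simp only [Finset.mem_erase, Finset.mem_Icc, List.mem_toFinset, List.mem_cons,
      List.mem_append, hw', List.not_mem_nil, or_false]
    omega

-- By the second order the side containing `a` is `a :: u`, by the first it is an initial block
-- of `a :: w`.
theorem IsInterval.take_subset_of_cut {G P Q : Finset ℕ} {a b : ℕ} {w u v : List ℕ}
    (hα : IsOrdering G (a :: (w ++ [b]))) (hβ : IsOrdering G (v ++ b :: a :: u))
    (hcover : P ∪ Q = G) (hPQ : Disjoint P Q) (hQ : Q.Nonempty) (ha : a ∈ P)
    (hPα : IsInterval (a :: (w ++ [b])) P) (hPβ : IsInterval (v ++ b :: a :: u) P)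
    (hQβ : IsInterval (v ++ b :: a :: u) Q) : w.take u.length ⊆ u := by
  have hbQ : b ∈ Q := by
    have hb : b ∈ P ∪ Q := by rw [hcover, ← hα.2]; simp
    exact (Finset.mem_union.mp hb).resolve_left
      (hPα.last_notMem hα.1 hPQ (hcover.trans hα.2.symm) hQ ha)
  have hPu := hPβ.eq_of_cut hβ.1 hQβ hPQ (hcover.trans hβ.2.symm) ha hbQ
  have hau : (a :: u).Nodup := hβ.1.sublist ((List.sublist_cons_self _ _).trans
    (List.sublist_append_right _ _))
  have haw : a ∉ w ++ [b] := (List.nodup_cons.mp hα.1).1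
  have htake := hPα.take_subset haw ha (k := u.length + 1)
    (by rw [hPu, List.toFinset_card_of_nodup hau, List.length_cons])
  intro z hz
  have hz' : z ∈ P := htake (by
    rw [List.take_succ_cons, List.take_append, List.mem_toFinset]
    exact List.mem_cons_of_mem _ (List.mem_append_left _ hz))
  rw [hPu, List.mem_toFinset, List.mem_cons] at hz'
  rcases hz' with rfl | hz'
  · exact absurd (List.mem_append_left _ (List.mem_of_mem_take hz)) haw
  · exact hz'

section Laminar

variable {α : Type*}

def IsLaminar (F : Finset (Finset α)) : Prop :=
  ∀ A ∈ F, ∀ B ∈ F, A ⊆ B ∨ B ⊆ A ∨ Disjoint A B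

namespace IsLaminar

variable {F F' : Finset (Finset α)} {G M R : Finset α}

theorem mono (hF : IsLaminar F) (h : F' ⊆ F) : IsLaminar F' :=
  fun A hA B hB => hF A (h hA) B (h hB)

theorem insert_of_forall_subset [DecidableEq α] (hF : IsLaminar F) (hR : ∀ A ∈ F, A ⊆ R) :
    IsLaminar (insert R F) := by
  intro A hA B hB
  rw [Finset.mem_insert] at hA hB
  rcases hA with rfl | hA <;> rcases hB with rfl | hB
  · exact Or.inl subset_rfl
  · exact Or.inr (Or.inl (hR B hB))
  · exact Or.inl (hR A hA)
  · exact hF A hA B hB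

theorem subset_or_disjoint_of_card_le {A : Finset α} (hF : IsLaminar F) (hM : M ∈ F)
    (hmax : ∀ B ∈ F, #B ≤ #M) (hA : A ∈ F) : A ⊆ M ∨ Disjoint A M := by
  rcases hF A hA M hM with h | h | h
  · exact Or.inl h
  · exact Or.inl (Finset.eq_of_subset_of_card_le h (hmax A hA) ▸ subset_rfl)
  · exact Or.inr h

theorem filter_not_subset_subset_sdiff [DecidableEq α] (hF : IsLaminar F) (hM : M ∈ F)
    (hmax : ∀ B ∈ F, #B ≤ #M) (hG : ∀ A ∈ F, A ⊆ G) :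
    ∀ A ∈ F.filter (¬ · ⊆ M), A ⊆ G \ M := by
  intro A hA
  obtain ⟨hA, hAM⟩ := Finset.mem_filter.mp hA
  exact Finset.subset_sdiff.mpr
    ⟨hG A hA, (hF.subset_or_disjoint_of_card_le hM hmax hA).resolve_left hAM⟩

theorem card_lt [DecidableEq α] (hF : IsLaminar F) (hG : ∀ A ∈ F, A ⊆ G ∧ 2 ≤ #A)
    (hne : G.Nonempty) : #F < #G := by
  induction G using Finset.strongInduction generalizing F with
  | H G ih =>
  have hF' : #F - 1 ≤ #(F.erase G) := Finset.pred_card_le_card_erase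
  rcases (F.erase G).eq_empty_or_nonempty with h0 | hne'
  · rcases F.eq_empty_or_nonempty with rfl | ⟨A, hA⟩
    · simpa using hne
    · have := Finset.card_le_card (hG A hA).1
      have := (hG A hA).2
      rw [h0, Finset.card_empty] at hF'
      omega
  obtain ⟨M, hM, hmax⟩ := (F.erase G).exists_max_image Finset.card hne'
  have hFe : IsLaminar (F.erase G) := hF.mono (Finset.erase_subset _ _)
  obtain ⟨hMG, hMF⟩ := Finset.mem_erase.mp hM
  have hMG' : M ⊂ G := Finset.ssubset_iff_subset_ne.mpr ⟨(hG M hMF).1, hMG⟩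
  have hM2 := (hG M hMF).2
  have hin : #((F.erase G).filter (· ⊆ M)) < #M :=
    ih M hMG' (hFe.mono (Finset.filter_subset _ _))
      (fun A hA => ⟨(Finset.mem_filter.mp hA).2,
        (hG A (Finset.mem_of_mem_erase (Finset.mem_filter.mp hA).1)).2⟩)
      (Finset.card_pos.mp (by omega))
  have hout : #((F.erase G).filter (¬ · ⊆ M)) < #(G \ M) :=
    ih (G \ M) (Finset.sdiff_ssubset hMG'.subset (Finset.card_pos.mp (by omega)))
      (hFe.mono (Finset.filter_subset _ _))
      (fun A hA => ⟨hFe.filter_not_subset_subset_sdiff hM hmax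
          (fun B hB => (hG B (Finset.mem_of_mem_erase hB)).1) A hA,
        (hG A (Finset.mem_of_mem_erase (Finset.mem_filter.mp hA).1)).2⟩)
      (Finset.sdiff_nonempty.mpr (not_subset_of_ssubset hMG'))
  have := Finset.card_filter_add_card_filter_not (s := F.erase G) (· ⊆ M)
  have := Finset.card_sdiff_of_subset hMG'.subset
  have := Finset.card_lt_card hMG'
  omega

theorem exists_sdiff_mem_or_card_eq_one [DecidableEq α] (hF : IsLaminar F)
    (hG : ∀ A ∈ F, A ⊂ G ∧ 2 ≤ #A) (hcard : #G ≤ #F + 2) (hne : F.Nonempty) :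
    ∃ M ∈ F, G \ M ∈ F ∨ #(G \ M) = 1 := by
  obtain ⟨M, hM, hmax⟩ := F.exists_max_image Finset.card hne
  refine ⟨M, hM, ?_⟩
  -- Otherwise the members inside `M`, and those inside `G \ M` together with `G \ M` itself,
  -- are two laminar families small enough to force `#F + 3 ≤ #G`.
  by_contra! hR
  obtain ⟨hRF, hR1⟩ := hR
  obtain ⟨hMG, hM2⟩ := hG M hM
  have hR0 : (G \ M).Nonempty := Finset.sdiff_nonempty.mpr (not_subset_of_ssubset hMG)
  have hin : #(F.filter (· ⊆ M)) < #M :=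
    (hF.mono (Finset.filter_subset _ _)).card_lt
      (fun A hA => ⟨(Finset.mem_filter.mp hA).2, (hG A (Finset.mem_filter.mp hA).1).2⟩)
      (Finset.card_pos.mp (by omega))
  have hout_sub := hF.filter_not_subset_subset_sdiff hM hmax (fun A hA => (hG A hA).1.subset)
  have hout : #(insert (G \ M) (F.filter (¬ · ⊆ M))) < #(G \ M) := by
    refine ((hF.mono (Finset.filter_subset _ _)).insert_of_forall_subset hout_sub).card_lt
      (fun A hA => ?_) hR0
    rcases Finset.mem_insert.mp hA with rfl | hA
    · have := Finset.card_pos.mpr hR0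
      exact ⟨subset_rfl, by omega⟩
    · exact ⟨hout_sub A hA, (hG A (Finset.mem_filter.mp hA).1).2⟩
  rw [Finset.card_insert_of_notMem (fun h => hRF (Finset.mem_filter.mp h).1)] at hout
  have := Finset.card_filter_add_card_filter_not (s := F) (· ⊆ M)
  have := Finset.card_sdiff_of_subset hMG.subset
  have := Finset.card_le_card hMG.subset
  omega

end IsLaminar

end Laminar

namespace IsTreeSplits

variable {L : Finset ℕ} {T : Finset (Finset ℕ)} {a b : ℕ}

theorem isLaminar_filter_notMem (hT : IsTreeSplits L T) (ha : a ∈ L) :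
    IsLaminar (T.filter (a ∉ ·)) := by
  intro A hA B hB
  obtain ⟨hA, haA⟩ := Finset.mem_filter.mp hA
  obtain ⟨hB, haB⟩ := Finset.mem_filter.mp hB
  rcases hT.2.2.1 A hA B hB with h | h | h | h
  · exact Or.inl h
  · exact Or.inr (Or.inl h)
  · exact Or.inr (Or.inr (Finset.disjoint_iff_inter_eq_empty.mpr h))
  · exact absurd (h ha) (by simp [haA, haB])

theorem two_mul_card_filter_notMem (hT : IsTreeSplits L T) (ha : a ∈ L) :
    2 * #(T.filter (a ∉ ·)) = #T := by
  have hcompl : #(T.filter (a ∈ ·)) = #(T.filter (a ∉ ·)) := by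
    refine Finset.card_nbij' (L \ ·) (L \ ·) (fun A hA => ?_) (fun A hA => ?_)
      (fun A hA => ?_) (fun A hA => ?_)
    · obtain ⟨hA, haA⟩ := Finset.mem_filter.mp hA
      exact Finset.mem_filter.mpr ⟨hT.2.1 A hA, by simp [haA]⟩
    · obtain ⟨hA, haA⟩ := Finset.mem_filter.mp hA
      exact Finset.mem_filter.mpr ⟨hT.2.1 A hA, by simp [ha, haA]⟩
    · exact Finset.sdiff_sdiff_eq_self (hT.1 A (Finset.mem_filter.mp hA).1).1
    · exact Finset.sdiff_sdiff_eq_self (hT.1 A (Finset.mem_filter.mp hA).1).1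
  have := Finset.card_filter_add_card_filter_not (s := T) (a ∈ ·)
  omega

-- `P` and `Q` are the leaf sets of the two subtrees at the neighbour of the leaf `a`.
theorem exists_partition_erase (hT : IsTreeSplits L T) (ha : a ∈ L) (hb : b ∈ L.erase a)
    (hL : 4 ≤ #L) : ∃ P Q, Disjoint P Q ∧ P ∪ Q = L.erase a ∧ b ∈ P ∧ Q.Nonempty ∧
      (P ∈ T ∨ #P = 1) ∧ (Q ∈ T ∨ #Q = 1) := by
  have hFG : ∀ A ∈ T.filter (a ∉ ·), A ⊂ L.erase a ∧ 2 ≤ #A := by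
    intro A hA
    obtain ⟨hA, haA⟩ := Finset.mem_filter.mp hA
    obtain ⟨hAL, hA2, hAcard⟩ := hT.1 A hA
    refine ⟨Finset.ssubset_iff_subset_ne.mpr ⟨Finset.subset_erase.mpr ⟨hAL, haA⟩, ?_⟩, hA2⟩
    rintro rfl
    rw [Finset.card_erase_of_mem ha] at hAcard
    omega
  have hcard := hT.two_mul_card_filter_notMem ha
  rw [hT.2.2.2] at hcard
  obtain ⟨M, hM, hR⟩ := (hT.isLaminar_filter_notMem ha).exists_sdiff_mem_or_card_eq_one hFG
    (by rw [Finset.card_erase_of_mem ha]; omega) (Finset.card_pos.mp (by omega))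
  obtain ⟨hMG, hM2⟩ := hFG M hM
  have hR' : L.erase a \ M ∈ T ∨ #(L.erase a \ M) = 1 :=
    hR.imp_left fun h => (Finset.mem_filter.mp h).1
  have hMne : M.Nonempty := Finset.card_pos.mp (by omega)
  have hRne : (L.erase a \ M).Nonempty := Finset.sdiff_nonempty.mpr (not_subset_of_ssubset hMG)
  have hcover : M ∪ (L.erase a \ M) = L.erase a := Finset.union_sdiff_of_subset hMG.subset
  by_cases hbM : b ∈ M
  · exact ⟨M, _, Finset.disjoint_sdiff, hcover, hbM, hRne, Or.inl (Finset.mem_filter.mp hM).1, hR'⟩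
  · exact ⟨_, M, Finset.sdiff_disjoint, by rw [Finset.union_comm, hcover],
      Finset.mem_sdiff.mpr ⟨hb, hbM⟩, hMne, hR', Or.inl (Finset.mem_filter.mp hM).1⟩

end IsTreeSplits

theorem klt_orthogonality_general (n : ℕ) (w g : List ℕ)
    (hw : w.Nodup ∧ w.toFinset = Finset.Icc 2 (n - 2))
    (hg : g.Nodup ∧ g.toFinset = Finset.Icc 2 (n - 2))
    (m : ℕ)
    (hint : ((w.take (m - 1)).toFinset ∩ (g.drop (m - 1)).toFinset).Nonempty)
    (α β : List ℕ)
    (hα : α = 1 :: (w ++ [n - 1, n]))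
    (hβ : β = 1 :: (g.take (m - 1) ++ n :: (g.drop (m - 1) ++ [n - 1])))
    (T : Finset (Finset ℕ)) (hT : IsTreeSplits (Finset.Icc 1 n) T) :
    ¬ (Planar α T ∧ Planar β T) := by
  rintro ⟨hTα, hTβ⟩
  obtain ⟨x, hx⟩ := hint
  rw [Finset.mem_inter, List.mem_toFinset, List.mem_toFinset] at hx
  have hn : 4 ≤ n := by
    have := hg.2 ▸ List.mem_toFinset.mpr (List.mem_of_mem_drop hx.2)
    rw [Finset.mem_Icc] at this
    omega
  have hlen : (g.take (m - 1)).length = m - 1 := by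
    have := List.length_pos_of_mem hx.2
    rw [List.length_drop] at this
    rw [List.length_take]
    omega
  set g₁ := g.take (m - 1)
  set g₂ := g.drop (m - 1)
  have hα' := IsOrdering.cons_append_pred hw (by omega)
  have hβ' : IsOrdering _ (g₂ ++ (n - 1) :: 1 :: g₁) := (IsOrdering.cons_append_pred
    (List.take_append_drop (m - 1) g ▸ hg) (by omega)).perm (List.perm_append_cons_cons ..).symm
  rw [hα, show 1 :: (w ++ [n - 1, n]) = (1 :: (w ++ [n - 1])) ++ n :: [] by simp] at hTα
  rw [hβ, show 1 :: (g₁ ++ n :: (g₂ ++ [n - 1])) = (1 :: g₁) ++ n :: (g₂ ++ [n - 1]) by simp]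
    at hTβ
  obtain ⟨P, Q, hPQ, hcover, h1P, hQne, hP, hQ⟩ :=
    hT.exists_partition_erase (a := n) (b := 1) (by simp; omega) (by simp; omega) (by simp; omega)
  have hPG : P ⊆ (Finset.Icc 1 n).erase n := hcover ▸ Finset.subset_union_left
  have hQG : Q ⊆ (Finset.Icc 1 n).erase n := hcover ▸ Finset.subset_union_right
  have hsub := IsInterval.take_subset_of_cut hα' hβ' hcover hPQ hQne h1P
    (by simpa using hTα.isInterval hP (by simpa [hα'.2] using hPG) fun h => by simpa using hPG h)
    (by simpa using hTβ.isInterval hP (by simpa [hβ'.2] using hPG) fun h => by simpa using hPG h)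
    (by simpa using hTβ.isInterval hQ (by simpa [hβ'.2] using hQG) fun h => by simpa using hQG h)
  exact List.disjoint_take_drop hg.1 le_rfl (hsub (hlen ▸ hx.1)) hx.2

/-- KLT orthogonality: for `α = (1, ω(2),...,ω(n-2), n-1, n)` and
`β = (1, γ(2),...,γ(m), n, γ(m+1),...,γ(n-2), n-1)` with `m = ⌈(n-3)/2⌉ + 1`,
if `{ω(2),...,ω(m)} ∩ {γ(m+1),...,γ(n-2)} ≠ ∅` then no unrooted binary tree with `n`
leaves is planar with respect to both `α` and `β`. -/
theorem klt_orthogonality (n : ℕ) (hn : 5 ≤ n) (w g : List ℕ)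
    (hw : w.Nodup ∧ w.toFinset = Finset.Icc 2 (n - 2))
    (hg : g.Nodup ∧ g.toFinset = Finset.Icc 2 (n - 2))
    (m : ℕ) (hm : m = (n - 2) / 2 + 1)
    (hint : ((w.take (m - 1)).toFinset ∩ (g.drop (m - 1)).toFinset).Nonempty)
    (α β : List ℕ)
    (hα : α = 1 :: (w ++ [n - 1, n]))
    (hβ : β = 1 :: (g.take (m - 1) ++ n :: (g.drop (m - 1) ++ [n - 1])))
    (T : Finset (Finset ℕ)) (hT : IsTreeSplits (Finset.Icc 1 n) T) :
    ¬ (Planar α T ∧ Planar β T) :=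
  klt_orthogonality_general n w g hw hg m hint α β hα hβ T hT
end

section
/- For orderings of the form α = (1, a, b, 4, 5) and β = (1, b, 5, a, 4) with {a,b} = {2,3}, there is no unrooted binary tree with 5 leaves planar with respect to both α and β. -/
/-- A 2-element arc of a 5-element cyclic ordering is a cyclically adjacent pair. -/
lemma arc_two {l : List ℕ} (hl : l.length = 5) (hnd : l.Nodup)
    {A : Finset ℕ} (h : IsArc l A) (h2 : A.card = 2) :
    ∃ k < 5, A = ((l.rotate k).take 2).toFinset := by
  obtain ⟨k, m, rfl⟩ := h
  have hnd' : (l.rotate k).Nodup := List.nodup_rotate.mpr hnd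
  have hlen : (l.rotate k).length = 5 := by rw [List.length_rotate, hl]
  have hcard : ((l.rotate k).take m).toFinset.card = min m 5 := by
    rw [List.toFinset_card_of_nodup (hnd'.sublist (List.take_sublist _ _)),
      List.length_take, hlen]
  have hm : m = 2 := by omega
  subst hm
  refine ⟨k % 5, Nat.mod_lt _ (by norm_num), ?_⟩
  conv_lhs => rw [← List.rotate_mod, hl]

/-- Base case of KLT orthogonality: for `{a,b} = {2,3}`, no unrooted binary tree with
5 leaves is planar with respect to both `(1,a,b,4,5)` and `(1,b,5,a,4)`. -/
theorem klt_base_case (a b : ℕ) (hab : ({a, b} : Finset ℕ) = {2, 3})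
    (T : Finset (Finset ℕ)) (hT : IsTreeSplits ({1, 2, 3, 4, 5} : Finset ℕ) T) :
    ¬ (Planar [1, a, b, 4, 5] T ∧ Planar [1, b, 5, a, 4] T) := by
  rintro ⟨hP1, hP2⟩
  obtain ⟨hsub, hcomp, -, hcard⟩ := hT
  have hL : ({1, 2, 3, 4, 5} : Finset ℕ).card = 5 := by decide
  have hTne : T.Nonempty := by
    rw [← Finset.card_pos, hcard, hL]; norm_num
  obtain ⟨A0, hA0⟩ := hTne
  obtain ⟨A, hA, hA2⟩ : ∃ A ∈ T, A.card = 2 := by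
    obtain ⟨hA0L, h2, h3⟩ := hsub A0 hA0
    rw [hL] at h3
    rcases eq_or_lt_of_le h2 with h | h
    · exact ⟨A0, hA0, h.symm⟩
    · refine ⟨_, hcomp A0 hA0, ?_⟩
      rw [Finset.card_sdiff_of_subset hA0L, hL]
      omega
  have hab' : (a = 2 ∧ b = 3) ∨ (a = 3 ∧ b = 2) := by
    have h2 : (2 : ℕ) ∈ ({a, b} : Finset ℕ) := by rw [hab]; simp
    have h3 : (3 : ℕ) ∈ ({a, b} : Finset ℕ) := by rw [hab]; simp
    have ha : a ∈ ({2, 3} : Finset ℕ) := by rw [← hab]; simp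
    have hb : b ∈ ({2, 3} : Finset ℕ) := by rw [← hab]; simp
    simp only [Finset.mem_insert, Finset.mem_singleton] at h2 h3 ha hb
    omega
  rcases hab' with ⟨rfl, rfl⟩ | ⟨rfl, rfl⟩ <;>
  · obtain ⟨k, hk, h1⟩ := arc_two (by decide) (by decide) (hP1 A hA) hA2
    obtain ⟨j, hj, h2⟩ := arc_two (by decide) (by decide) (hP2 A hA) hA2
    interval_cases k <;> interval_cases j <;>
      exact absurd (h1.symm.trans h2) (by decide)
end

section
/- In an unrooted binary tree planar with respect to both α = (1, ..., n-1, n) and β of KLT form (with n somewhere in the middle and n-1 at the end), the leaf n is never part of a cherry, and no two of the labels 1, n-1, n lie in a common cherry; hence the tree has a cherry {e_1,e_2} with at most one element from {1, n-1}. -/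
/-- Bound on laminar families with all sets of size at least 3 and properly
contained in the ground set. -/
lemma laminarH : ∀ N : ℕ, ∀ F : Finset (Finset ℕ), F.card ≤ N → ∀ L' : Finset ℕ,
    (∀ A ∈ F, ∀ B ∈ F, A ⊆ B ∨ B ⊆ A ∨ A ∩ B = ∅) →
    (∀ A ∈ F, A ⊆ L' ∧ 3 ≤ A.card ∧ A ≠ L') → F.card ≤ L'.card - 3 := by
  intro N
  induction N with
  | zero => intro F hF L' _ _; omega
  | succ N ih =>
    intro F hFN L' hlam hsub
    rcases F.eq_empty_or_nonempty with rfl | hne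
    · simp
    obtain ⟨M, hM, hMmax⟩ := F.exists_maximal hne
    have hMl := hsub M hM
    have hMlt : M.card < L'.card := by
      have := Finset.card_lt_card (lt_of_le_of_ne (Finset.le_iff_subset.mpr hMl.1)
        hMl.2.2)
      exact this
    have hdisj : ∀ A ∈ F, ¬ A ⊆ M → A ∩ M = ∅ := by
      intro A hA hAM
      rcases hlam A hA M hM with h | h | h
      · exact absurd h hAM
      · rcases eq_or_lt_of_le (Finset.le_iff_subset.mpr h) with rfl | hlt
        · simp at hAM
        · exact absurd (hMmax hA hlt.le) (not_le_of_gt hlt)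
      · exact h
    set F1 := (F.erase M).filter (· ⊆ M) with hF1
    set F2 := (F.erase M).filter (fun A => ¬ A ⊆ M) with hF2
    have hcard : F.card = 1 + F1.card + F2.card := by
      have h2 : F1.card + F2.card = (F.erase M).card :=
        Finset.card_filter_add_card_filter_not _
      have h3 : (F.erase M).card = F.card - 1 := Finset.card_erase_of_mem hM
      have h4 : 1 ≤ F.card := Finset.card_pos.mpr hne
      omega
    have hF1b : F1.card ≤ M.card - 3 := by
      apply ih F1 (by
        have : F1 ⊆ F.erase M := Finset.filter_subset _ _
        have := Finset.card_le_card this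
        have h3 : (F.erase M).card = F.card - 1 := Finset.card_erase_of_mem hM
        omega) M
      · intro A hA B hB
        simp only [hF1, Finset.mem_filter, Finset.mem_erase] at hA hB
        exact hlam A hA.1.2 B hB.1.2
      · intro A hA
        simp only [hF1, Finset.mem_filter, Finset.mem_erase] at hA
        exact ⟨hA.2, (hsub A hA.1.2).2.1, hA.1.1⟩
    have hF2sub : ∀ A ∈ F2, A ⊆ L' \ M := by
      intro A hA
      simp only [hF2, Finset.mem_filter, Finset.mem_erase] at hA
      have hd := hdisj A hA.1.2 hA.2
      intro x hx
      simp only [Finset.mem_sdiff]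
      refine ⟨(hsub A hA.1.2).1 hx, fun hxM => ?_⟩
      have : x ∈ A ∩ M := Finset.mem_inter.mpr ⟨hx, hxM⟩
      simp [hd] at this
    have hF2card : F2.card ≤ F.card - 1 := by
      have : F2 ⊆ F.erase M := Finset.filter_subset _ _
      have := Finset.card_le_card this
      have h3 : (F.erase M).card = F.card - 1 := Finset.card_erase_of_mem hM
      omega
    have hF2lam : ∀ A ∈ F2, ∀ B ∈ F2, A ⊆ B ∨ B ⊆ A ∨ A ∩ B = ∅ := by
      intro A hA B hB
      simp only [hF2, Finset.mem_filter, Finset.mem_erase] at hA hB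
      exact hlam A hA.1.2 B hB.1.2
    have hF2c3 : ∀ A ∈ F2, 3 ≤ A.card := by
      intro A hA
      simp only [hF2, Finset.mem_filter, Finset.mem_erase] at hA
      exact (hsub A hA.1.2).2.1
    have hF2b : F2.card ≤ (L' \ M).card - 2 := by
      by_cases hLM : (L' \ M) ∈ F2
      · have hrec : (F2.erase (L' \ M)).card ≤ (L' \ M).card - 3 := by
          apply ih _ (by
            have := Finset.card_erase_of_mem hLM
            omega) (L' \ M)
          · intro A hA B hB
            exact hF2lam A (Finset.mem_of_mem_erase hA) B (Finset.mem_of_mem_erase hB)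
          · intro A hA
            exact ⟨hF2sub A (Finset.mem_of_mem_erase hA),
              hF2c3 A (Finset.mem_of_mem_erase hA), (Finset.mem_erase.mp hA).1⟩
        have h1 := Finset.card_erase_of_mem hLM
        have h2 : 3 ≤ (L' \ M).card := hF2c3 _ hLM
        omega
      · have : F2.card ≤ (L' \ M).card - 3 := by
          apply ih _ (by omega) (L' \ M)
          · exact hF2lam
          · intro A hA
            exact ⟨hF2sub A hA, hF2c3 A hA, fun h => hLM (h ▸ hA)⟩
        omega
    have hsd : (L' \ M).card = L'.card - M.card := Finset.card_sdiff_of_subset hMl.1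
    have h3M : 3 ≤ M.card := hMl.2.1
    omega

/-- A two-element arc of a duplicate-free list consists of two cyclically
adjacent entries. -/
lemma arc_pair {l : List ℕ} (hnd : l.Nodup) (hlen : 2 ≤ l.length) {A : Finset ℕ}
    (hA : IsArc l A) (hcard : A.card = 2) :
    ∃ i, ∃ (h1 : i < l.length) (h2 : (i + 1) % l.length < l.length),
      A = {l[i], l[(i + 1) % l.length]} := by
  obtain ⟨k, m, hA⟩ := hA
  have hrl : (l.rotate k).length = l.length := List.length_rotate l k
  have hrnd : (l.rotate k).Nodup := (List.nodup_rotate).mpr hnd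
  have htnd : ((l.rotate k).take m).Nodup := hrnd.sublist (List.take_sublist m _)
  have hlt : ((l.rotate k).take m).length = 2 := by
    rw [← List.toFinset_card_of_nodup htnd, ← hA, hcard]
  obtain ⟨a, b, hab⟩ := List.length_eq_two.mp hlt
  have h0 : 0 < (l.rotate k).length := by omega
  have h1 : 1 < (l.rotate k).length := by omega
  have ha : (l.rotate k)[0] = a := by
    have h : ((l.rotate k).take m)[0]'(by rw [hlt]; omega) = a := by simp [hab]
    rwa [List.getElem_take] at h
  have hb : (l.rotate k)[1] = b := by
    have h : ((l.rotate k).take m)[1]'(by rw [hlt]; omega) = b := by simp [hab]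
    rwa [List.getElem_take] at h
  have hmod : ∀ j, (j + k) % l.length < l.length := fun j => Nat.mod_lt _ (by omega)
  have ha' : l[(0 + k) % l.length]'(hmod 0) = a := by
    rw [← List.getElem_rotate l k 0 h0]; exact ha
  have hb' : l[(1 + k) % l.length]'(hmod 1) = b := by
    rw [← List.getElem_rotate l k 1 h1]; exact hb
  refine ⟨k % l.length, Nat.mod_lt _ (by omega), Nat.mod_lt _ (by omega), ?_⟩
  have e0 : (0 + k) % l.length = k % l.length := by rw [Nat.zero_add]
  have e1 : (1 + k) % l.length = (k % l.length + 1) % l.length := by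
    rw [Nat.add_comm, Nat.add_mod k 1, Nat.mod_eq_of_lt (show 1 < l.length by omega)]
  have ha2 : l[k % l.length]'(Nat.mod_lt _ (by omega)) = a := by
    rw [← ha']; exact (getElem_congr_idx e0).symm
  have hb2 : l[(k % l.length + 1) % l.length]'(Nat.mod_lt _ (by omega)) = b := by
    rw [← hb']; exact (getElem_congr_idx e1).symm
  rw [hA, hab, ha2, hb2]
  simp

lemma get_cons_append_right (x : ℕ) (u v : List ℕ) (j : ℕ) (hj : j < v.length) :
    (x :: (u ++ v))[u.length + 1 + j]'(by simp; omega) = v[j] := by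
  rw [getElem_congr_idx (show u.length + 1 + j = (u.length + j) + 1 by omega)]
  rw [List.getElem_cons_succ]
  rw [List.getElem_append_right (by omega)]
  exact getElem_congr_idx (by omega)

lemma get_cons_append_left (x : ℕ) (u v : List ℕ) (i : ℕ) (hi : i < u.length) :
    (x :: (u ++ v))[i + 1]'(by simp; omega) = u[i] := by
  rw [List.getElem_cons_succ]
  exact List.getElem_append_left hi

/-- For a tree planar with respect to both a KLT `α`-ordering and `β`-ordering:
(i) no cherry contains two of the labels `1, n-1, n`; (ii) `n` is in no cherry;
(iii) hence there is a cherry containing at most one element of `{1, n-1}`. -/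
theorem klt_cherry_structure (n : ℕ) (hn : 6 ≤ n) (w g : List ℕ)
    (hw : w.Nodup ∧ w.toFinset = Finset.Icc 2 (n - 2))
    (hg : g.Nodup ∧ g.toFinset = Finset.Icc 2 (n - 2))
    (m : ℕ) (hm : 2 ≤ m ∧ m ≤ n - 3)
    (α β : List ℕ)
    (hα : α = 1 :: (w ++ [n - 1, n]))
    (hβ : β = 1 :: (g.take (m - 1) ++ n :: (g.drop (m - 1) ++ [n - 1])))
    (T : Finset (Finset ℕ)) (hT : IsTreeSplits (Finset.Icc 1 n) T)
    (hpα : Planar α T) (hpβ : Planar β T) :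
    (∀ A ∈ T, A.card = 2 → n ∉ A) ∧
    (∀ A ∈ T, A.card = 2 →
      ¬ ({1, n - 1} : Finset ℕ) ⊆ A ∧ ¬ ({1, n} : Finset ℕ) ⊆ A ∧
      ¬ ({n - 1, n} : Finset ℕ) ⊆ A) ∧
    (∃ A ∈ T, A.card = 2 ∧ (A ∩ ({1, n - 1} : Finset ℕ)).card ≤ 1) := by
  obtain ⟨hwnd, hwF⟩ := hw
  obtain ⟨hgnd, hgF⟩ := hg
  obtain ⟨hm2, hm3⟩ := hm
  have hwmem : ∀ x ∈ w, 2 ≤ x ∧ x ≤ n - 2 := by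
    intro x hx
    have : x ∈ w.toFinset := List.mem_toFinset.mpr hx
    rw [hwF] at this
    simpa [Finset.mem_Icc] using this
  have hgmem : ∀ x ∈ g, 2 ≤ x ∧ x ≤ n - 2 := by
    intro x hx
    have : x ∈ g.toFinset := List.mem_toFinset.mpr hx
    rw [hgF] at this
    simpa [Finset.mem_Icc] using this
  have hwlen : w.length = n - 3 := by
    have := List.toFinset_card_of_nodup hwnd
    rw [hwF, Nat.card_Icc] at this
    omega
  have hglen : g.length = n - 3 := by
    have := List.toFinset_card_of_nodup hgnd
    rw [hgF, Nat.card_Icc] at this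
    omega
  have hαlen : α.length = n := by
    rw [hα]; simp [hwlen]; omega
  have htlen : (g.take (m - 1)).length = m - 1 := by
    rw [List.length_take]; omega
  have hdlen : (g.drop (m - 1)).length = n - 3 - (m - 1) := by
    rw [List.length_drop]; omega
  have hβlen : β.length = n := by
    rw [hβ]; simp [htlen, hdlen]; omega
  -- nodup of α
  have hαnd : α.Nodup := by
    rw [hα]
    refine List.nodup_cons.mpr ⟨?_, ?_⟩
    · simp only [List.mem_append, List.mem_cons, List.not_mem_nil]
      rintro (h | h)
      · have := hwmem 1 h; omega
      · simp at h; omega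
    · refine List.Nodup.append hwnd (by simp; omega) ?_
      intro x hx hy
      have := hwmem x hx
      simp at hy
      omega
  -- nodup of β via permutation
  have hβperm : β.Perm (1 :: (n :: (g ++ [n - 1]))) := by
    rw [hβ]
    refine List.Perm.cons 1 ?_
    have h1 : (g.take (m - 1) ++ n :: (g.drop (m - 1) ++ [n - 1])).Perm
        (n :: (g.take (m - 1) ++ (g.drop (m - 1) ++ [n - 1]))) := List.perm_middle
    refine h1.trans ?_
    rw [← List.append_assoc, List.take_append_drop]
  have hβnd : β.Nodup := by
    refine hβperm.symm.nodup ?_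
    refine List.nodup_cons.mpr ⟨?_, List.nodup_cons.mpr ⟨?_, ?_⟩⟩
    · simp only [List.mem_cons, List.mem_append, List.not_mem_nil]
      rintro (h | h | h)
      · omega
      · have := hgmem 1 h; omega
      · simp at h; omega
    · simp only [List.mem_append, List.mem_cons, List.not_mem_nil]
      rintro (h | h)
      · have := hgmem n h; omega
      · simp at h; omega
    · refine List.Nodup.append hgnd (by simp) ?_
      intro x hx hy
      have := hgmem x hx
      simp at hy
      omega
  -- getElem facts for α
  have hα0 : ∀ (h : 0 < α.length), α[0] = 1 := by
    intro h; rw [getElem_congr_coll hα]; rfl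
  have hαn2 : ∀ (h : n - 2 < α.length), α[n - 2]'h = n - 1 := by
    intro h
    have e : n - 2 = w.length + 1 + 0 := by omega
    rw [getElem_congr_coll hα, getElem_congr_idx e]
    exact get_cons_append_right 1 w [n - 1, n] 0 (by simp)
  have hαn1 : ∀ (h : n - 1 < α.length), α[n - 1]'h = n := by
    intro h
    have e : n - 1 = w.length + 1 + 1 := by omega
    rw [getElem_congr_coll hα, getElem_congr_idx e]
    exact get_cons_append_right 1 w [n - 1, n] 1 (by simp)
  -- getElem facts for β
  have hβ0 : ∀ (h : 0 < β.length), β[0] = 1 := by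
    intro h; rw [getElem_congr_coll hβ]; rfl
  have hβm : ∀ (h : m < β.length), β[m]'h = n := by
    intro h
    have e : m = (g.take (m - 1)).length + 1 + 0 := by omega
    rw [getElem_congr_coll hβ, getElem_congr_idx e]
    exact get_cons_append_right 1 _ _ 0 (by simp)
  have hβm1 : ∀ (h : m + 1 < β.length), β[m + 1]'h ∈ g := by
    intro h
    have e : m + 1 = (g.take (m - 1)).length + 1 + 1 := by omega
    rw [getElem_congr_coll hβ, getElem_congr_idx e]
    rw [get_cons_append_right 1 _ _ 1 (by simp)]
    have hd0 : 0 < (g.drop (m - 1)).length := by omega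
    rw [List.getElem_cons_succ]
    rw [List.getElem_append_left hd0]
    exact List.mem_of_mem_drop (List.getElem_mem _)
  have hβm2 : ∀ (h : m - 1 < β.length), β[m - 1]'h ∈ g := by
    intro h
    have e : m - 1 = (m - 2) + 1 := by omega
    rw [getElem_congr_coll hβ, getElem_congr_idx e]
    rw [get_cons_append_left 1 (g.take (m-1)) (n :: (g.drop (m-1) ++ [n-1])) (m - 2)
      (by rw [htlen]; omega)]
    rw [List.getElem_take]
    exact List.getElem_mem _
  -- mod arithmetic helper
  have hmodn : ∀ i : ℕ, i < n → (i + 1) % n = i + 1 ∨ (i + 1 = n ∧ (i + 1) % n = 0) := by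
    intro i hi
    rcases Nat.lt_or_ge (i + 1) n with h | h
    · exact Or.inl (Nat.mod_eq_of_lt h)
    · have : i + 1 = n := by omega
      exact Or.inr ⟨this, by rw [this, Nat.mod_self]⟩
  -- (1) no cherry contains n
  have key_n : ∀ A ∈ T, A.card = 2 → n ∉ A := by
    intro A hA hA2 hnA
    obtain ⟨i, hi1, hi2, hAα⟩ := arc_pair hαnd (by omega) (hpα A hA) hA2
    obtain ⟨j, hj1, hj2, hAβ⟩ := arc_pair hβnd (by omega) (hpβ A hA) hA2
    have hi1' : i < n := by omega
    have hj1' : j < n := by omega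
    -- from the α-ordering: 1 ∈ A or n - 1 ∈ A
    have hstep1 : 1 ∈ A ∨ (n - 1) ∈ A := by
      have hnA' := hnA
      rw [hAα] at hnA'
      simp only [Finset.mem_insert, Finset.mem_singleton] at hnA'
      rcases hnA' with h | h
      · left
        have hidx : i = n - 1 := by
          apply (List.Nodup.getElem_inj_iff hαnd).mp
          rw [hαn1 (by omega)]; exact h.symm
        have e2 : (i + 1) % α.length = 0 := by
          rw [hαlen, hidx, show n - 1 + 1 = n by omega, Nat.mod_self]
        have hval : α[(i + 1) % α.length]'hi2 = 1 := by
          rw [getElem_congr_idx e2, hα0]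
        rw [hAα]
        exact Finset.mem_insert_of_mem (Finset.mem_singleton.mpr hval.symm)
      · right
        have hidx : (i + 1) % α.length = n - 1 := by
          apply (List.Nodup.getElem_inj_iff hαnd).mp
          rw [hαn1 (by omega)]; exact h.symm
        rw [hαlen] at hidx
        have hieq : i = n - 2 := by
          rcases hmodn i hi1' with h' | h' <;> omega
        have hval : α[i]'hi1 = n - 1 := by
          rw [getElem_congr_idx hieq, hαn2]
        rw [hAα]
        exact Finset.mem_insert.mpr (Or.inl hval.symm)
    -- from the β-ordering: every element of A is n or in g
    have hstep2 : ∀ x ∈ A, x = n ∨ x ∈ g := by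
      have hnA' := hnA
      rw [hAβ] at hnA'
      simp only [Finset.mem_insert, Finset.mem_singleton] at hnA'
      have hm1n : m + 1 < n := by omega
      rcases hnA' with h | h
      · have hidx : j = m := by
          apply (List.Nodup.getElem_inj_iff hβnd).mp
          rw [hβm (by omega)]; exact h.symm
        have e2 : (j + 1) % β.length = m + 1 := by
          rw [hβlen, hidx, Nat.mod_eq_of_lt hm1n]
        have hval : β[(j + 1) % β.length]'hj2 ∈ g := by
          rw [getElem_congr_idx e2]
          exact hβm1 (by omega)
        intro x hx
        rw [hAβ] at hx
        simp only [Finset.mem_insert, Finset.mem_singleton] at hx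
        rcases hx with rfl | rfl
        · left; rw [getElem_congr_idx hidx, hβm]
        · right; exact hval
      · have hidx : (j + 1) % β.length = m := by
          apply (List.Nodup.getElem_inj_iff hβnd).mp
          rw [hβm (by omega)]; exact h.symm
        rw [hβlen] at hidx
        have hjeq : j = m - 1 := by
          rcases hmodn j hj1' with h' | h' <;> omega
        have hval : β[j]'hj1 ∈ g := by
          rw [getElem_congr_idx hjeq]
          exact hβm2 (by omega)
        intro x hx
        rw [hAβ] at hx
        simp only [Finset.mem_insert, Finset.mem_singleton] at hx
        rcases hx with rfl | rfl
        · right; exact hval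
        · left
          have e2 : (j + 1) % β.length = m := by rw [hβlen]; exact hidx
          rw [getElem_congr_idx e2, hβm]
    rcases hstep1 with h1 | h1
    · rcases hstep2 1 h1 with h | h
      · omega
      · have := hgmem 1 h; omega
    · rcases hstep2 (n - 1) h1 with h | h
      · omega
      · have := hgmem (n - 1) h; omega
  -- (2a) no cherry contains both 1 and n-1
  have key_1n1 : ∀ A ∈ T, A.card = 2 → ¬ ({1, n - 1} : Finset ℕ) ⊆ A := by
    intro A hA hA2 hsub
    have hAeq : ({1, n - 1} : Finset ℕ) = A := by
      apply Finset.eq_of_subset_of_card_le hsub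
      rw [hA2]
      rw [Finset.card_insert_of_notMem (by simp; omega), Finset.card_singleton]
    obtain ⟨i, hi1, hi2, hAα⟩ := arc_pair hαnd (by omega) (hpα A hA) hA2
    have hi1' : i < n := by omega
    have h1A : (1 : ℕ) ∈ A := hsub (by simp)
    have hn1A : (n - 1 : ℕ) ∈ A := hsub (by simp)
    rw [hAα] at h1A hn1A
    simp only [Finset.mem_insert, Finset.mem_singleton] at h1A hn1A
    have hone : ¬ (1 % n = n - 2) := by
      rw [Nat.mod_eq_of_lt (by omega)]; omega
    have c1 : i = 0 ∨ (i + 1) % n = 0 := by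
      rcases h1A with h | h
      · left
        apply (List.Nodup.getElem_inj_iff hαnd).mp
        rw [hα0 (by omega)]; exact h.symm
      · right
        have : (i + 1) % α.length = 0 := by
          apply (List.Nodup.getElem_inj_iff hαnd).mp
          rw [hα0 (by omega)]; exact h.symm
        rwa [hαlen] at this
    have c2 : i = n - 2 ∨ (i + 1) % n = n - 2 := by
      rcases hn1A with h | h
      · left
        apply (List.Nodup.getElem_inj_iff hαnd).mp
        rw [hαn2 (by omega)]; exact h.symm
      · right
        have : (i + 1) % α.length = n - 2 := by
          apply (List.Nodup.getElem_inj_iff hαnd).mp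
          rw [hαn2 (by omega)]; exact h.symm
        rwa [hαlen] at this
    rcases hmodn i hi1' with hmi | hmi <;>
      rcases c1 with c1 | c1 <;> rcases c2 with c2 | c2 <;> omega
  -- counting: the filtered family avoiding 1
  obtain ⟨hT1, hT2, hT3, hT4⟩ := hT
  have hL : (Finset.Icc 1 n).card = n := by rw [Nat.card_Icc]; omega
  set L := Finset.Icc 1 n with hLdef
  have h1L : (1 : ℕ) ∈ L := by simp [hLdef, Finset.mem_Icc]; omega
  set S := T.filter (fun A => (1:ℕ) ∉ A) with hSdef
  have hScard : S.card = n - 3 := by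
    have hbij : S.card = (T.filter (fun A => (1:ℕ) ∈ A)).card := by
      apply Finset.card_bij' (fun A _ => L \ A) (fun B _ => L \ B)
      · intro A hA
        simp only [hSdef, Finset.mem_filter] at hA
        simp only [Finset.mem_filter]
        exact ⟨hT2 A hA.1, Finset.mem_sdiff.mpr ⟨h1L, hA.2⟩⟩
      · intro B hB
        simp only [Finset.mem_filter] at hB
        simp only [hSdef, Finset.mem_filter]
        refine ⟨hT2 B hB.1, fun hc => ?_⟩
        exact (Finset.mem_sdiff.mp hc).2 hB.2
      · intro A hA
        simp only [hSdef, Finset.mem_filter] at hA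
        exact Finset.sdiff_sdiff_eq_self (hT1 A hA.1).1
      · intro B hB
        simp only [Finset.mem_filter] at hB
        exact Finset.sdiff_sdiff_eq_self (hT1 B hB.1).1
    have hsum := Finset.card_filter_add_card_filter_not
      (s := T) (fun A => (1:ℕ) ∈ A)
    have : (T.filter (fun A => ¬ (1:ℕ) ∈ A)) = S := rfl
    rw [this] at hsum
    rw [hL] at hT4
    omega
  have hexists : ∃ A ∈ S, A.card = 2 := by
    by_contra hno
    push_neg at hno
    have hbound : S.card ≤ (Finset.Icc 2 n).card - 3 := by
      apply laminarH S.card S le_rfl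
      · intro A hA B hB
        simp only [hSdef, Finset.mem_filter] at hA hB
        rcases hT3 A hA.1 B hB.1 with h | h | h | h
        · exact Or.inl h
        · exact Or.inr (Or.inl h)
        · exact Or.inr (Or.inr h)
        · exfalso
          rcases Finset.mem_union.mp (h h1L) with h' | h'
          · exact hA.2 h'
          · exact hB.2 h'
      · intro A hA
        simp only [hSdef, Finset.mem_filter] at hA
        have hsubL := (hT1 A hA.1).1
        have hc2 := (hT1 A hA.1).2.1
        have hcu := (hT1 A hA.1).2.2
        rw [hL] at hcu
        refine ⟨?_, ?_, ?_⟩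
        · intro x hx
          have := hsubL hx
          simp only [hLdef, Finset.mem_Icc] at this
          simp only [Finset.mem_Icc]
          have hx1 : x ≠ 1 := fun h => hA.2 (h ▸ hx)
          omega
        · have := hno A (Finset.mem_filter.mpr hA)
          omega
        · intro hEq
          have : A.card = n - 1 := by rw [hEq, Nat.card_Icc]; omega
          omega
    rw [Nat.card_Icc] at hbound
    omega
  refine ⟨key_n, ?_, ?_⟩
  · intro A hA hA2
    refine ⟨key_1n1 A hA hA2, fun hsub => ?_, fun hsub => ?_⟩
    · exact key_n A hA hA2 (hsub (by simp))
    · exact key_n A hA hA2 (hsub (by simp))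
  · obtain ⟨A, hAS, hA2⟩ := hexists
    simp only [hSdef, Finset.mem_filter] at hAS
    refine ⟨A, hAS.1, hA2, ?_⟩
    have hss : A ∩ ({1, n - 1} : Finset ℕ) ⊆ {n - 1} := by
      intro x hx
      simp only [Finset.mem_inter, Finset.mem_insert, Finset.mem_singleton] at hx
      rcases hx.2 with rfl | rfl
      · exact absurd hx.1 hAS.2
      · simp
    calc (A ∩ ({1, n - 1} : Finset ℕ)).card ≤ ({n - 1} : Finset ℕ).card :=
          Finset.card_le_card hss
      _ = 1 := Finset.card_singleton _
end

section
/- For the cyclic orderings α = (1,2,3,4,5,6) and β = (1,3,6,5,2,4) of {1,...,6}, the only 2-element set adjacent in both cyclic orders is {5,6}; after deleting 6 from both, the resulting 5-element cyclic orderings (1,2,3,4,5) and (1,3,5,2,4) share no adjacent pair; hence α and β share no common planar binary tree. -/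
/-!
The splits of a tree that is planar for a cyclic ordering are arcs of that ordering. A binary tree
on six leaves has six splits, each of size between 2 and 4, but the only such arcs common to
`(1,2,3,4,5,6)` and `(1,3,6,5,2,4)` are `{5,6}` and `{1,2,3,4}`. Both this and the claims about
adjacent pairs are finite computations once arcs and adjacent pairs are enumerated as finsets.
-/

section

variable {α : Type*}

def cyclicPairs [DecidableEq α] (l : List α) : Finset (Sym2 α) :=
  (List.zipWith (fun a b => s(a, b)) l (l.rotate 1)).toFinset

def arcs [DecidableEq α] (l : List α) : Finset (Finset α) :=
  (Finset.range l.length ×ˢ Finset.range (l.length + 1)).image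
    fun p => ((l.rotate p.1).take p.2).toFinset

theorem List.take_two_rotate {l : List α} (hl : 2 ≤ l.length) {k : ℕ} (hk : k < l.length) :
    (l.rotate k).take 2 = [l[k], l[(k + 1) % l.length]'(Nat.mod_lt _ (by omega))] := by
  apply List.ext_getElem
  · simp [hl]
  · intro n h _
    simp only [List.length_take, List.length_rotate] at h
    have : n < 2 := by omega
    interval_cases n <;> simp [List.getElem_rotate, Nat.mod_eq_of_lt hk, Nat.add_comm]

theorem mem_cyclicPairs [DecidableEq α] {l : List α} {z : Sym2 α} :
    z ∈ cyclicPairs l ↔ ∃ (k : ℕ) (hk : k < l.length),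
      s(l[k], l[(k + 1) % l.length]'(Nat.mod_lt _ (by omega))) = z := by
  simp [cyclicPairs, List.mem_iff_getElem]

end

theorem adjPair_iff_mem_cyclicPairs {l : List ℕ} (hl : 2 ≤ l.length) {i j : ℕ} :
    AdjPair l i j ↔ s(i, j) ∈ cyclicPairs l := by
  rw [mem_cyclicPairs]
  constructor
  · rintro ⟨k, h⟩
    obtain ⟨k', hk', hk'_eq⟩ : ∃ k' < l.length, k % l.length = k' :=
      ⟨_, Nat.mod_lt _ (by omega), rfl⟩
    rw [← List.rotate_mod, hk'_eq, List.take_two_rotate hl hk'] at h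
    refine ⟨k', hk', ?_⟩
    rcases h with h | h <;> simp only [List.cons.injEq, and_true] at h <;>
      obtain ⟨rfl, rfl⟩ := h
    · rfl
    · exact Sym2.eq_swap
  · rintro ⟨k, hk, h⟩
    refine ⟨k, ?_⟩
    rw [List.take_two_rotate hl hk]
    rcases Sym2.eq_iff.1 h with ⟨rfl, rfl⟩ | ⟨rfl, rfl⟩
    · exact .inl rfl
    · exact .inr rfl

theorem isArc_iff_mem_arcs {l : List ℕ} (hl : l ≠ []) {A : Finset ℕ} :
    IsArc l A ↔ A ∈ arcs l := by
  simp only [IsArc, arcs, Finset.mem_image, Finset.mem_product, Finset.mem_range, Prod.exists]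
  constructor
  · rintro ⟨k, m, rfl⟩
    refine ⟨k % l.length, min m l.length,
      ⟨Nat.mod_lt _ (List.length_pos_iff.2 hl), by omega⟩, ?_⟩
    rw [List.rotate_mod, ← List.length_rotate (n := k), ← List.take_eq_take_min]
  · rintro ⟨k, m, -, rfl⟩
    exact ⟨k, m, rfl⟩

theorem Planar.subset_arcs {l : List ℕ} (hl : l ≠ []) {T : Finset (Finset ℕ)}
    (h : Planar l T) :
    T ⊆ arcs l :=
  fun A hA => (isArc_iff_mem_arcs hl).1 (h A hA)

theorem IsTreeSplits.card_le_card_commonArcs {L : Finset ℕ} {T : Finset (Finset ℕ)}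
    (hT : IsTreeSplits L T) {l l' : List ℕ} (hl : l ≠ []) (hl' : l' ≠ [])
    (h : Planar l T) (h' : Planar l' T) :
    2 * (L.card - 3) ≤
      ((arcs l ∩ arcs l').filter fun A => 2 ≤ A.card ∧ A.card + 2 ≤ L.card).card := by
  rw [← hT.2.2.2]
  refine Finset.card_le_card fun A hA => Finset.mem_filter.2 ⟨?_, ?_⟩
  · exact Finset.mem_inter.2 ⟨h.subset_arcs hl hA, h'.subset_arcs hl' hA⟩
  · exact (hT.1 A hA).2

/-- For `α = (1,2,3,4,5,6)` and `β = (1,3,6,5,2,4)`: the only pair adjacent in both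
cyclic orderings is `{5,6}`; after deleting `6`, the orderings `(1,2,3,4,5)` and
`(1,3,5,2,4)` share no adjacent pair; hence `α` and `β` share no common planar
unrooted binary tree, i.e. `I(α,β) = 0`. -/
theorem intersection_zero_example :
    (∀ i j : ℕ, i ≠ j →
      (AdjPair [1, 2, 3, 4, 5, 6] i j ∧ AdjPair [1, 3, 6, 5, 2, 4] i j ↔
        (i = 5 ∧ j = 6) ∨ (i = 6 ∧ j = 5))) ∧
    (∀ i j : ℕ, i ≠ j →
      ¬ (AdjPair [1, 2, 3, 4, 5] i j ∧ AdjPair [1, 3, 5, 2, 4] i j)) ∧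
    (∀ T : Finset (Finset ℕ), IsTreeSplits ({1, 2, 3, 4, 5, 6} : Finset ℕ) T →
      ¬ (Planar [1, 2, 3, 4, 5, 6] T ∧ Planar [1, 3, 6, 5, 2, 4] T)) := by
  have common_pairs :
      cyclicPairs [1, 2, 3, 4, 5, 6] ∩ cyclicPairs [1, 3, 6, 5, 2, 4] = {s(5, 6)} := by
    decide
  have common_pairs' : cyclicPairs [1, 2, 3, 4, 5] ∩ cyclicPairs [1, 3, 5, 2, 4] = ∅ := by
    decide
  have common_arcs : ((arcs [1, 2, 3, 4, 5, 6] ∩ arcs [1, 3, 6, 5, 2, 4]).filter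
      fun A => 2 ≤ A.card ∧ A.card + 2 ≤ 6) = {{5, 6}, {1, 2, 3, 4}} := by
    decide
  refine ⟨fun i j _ => ?_, fun i j _ => ?_, fun T hT ⟨hα, hβ⟩ => ?_⟩
  · rw [adjPair_iff_mem_cyclicPairs (by simp), adjPair_iff_mem_cyclicPairs (by simp),
      ← Finset.mem_inter, common_pairs, Finset.mem_singleton, Sym2.eq_iff]
  · rw [adjPair_iff_mem_cyclicPairs (by simp), adjPair_iff_mem_cyclicPairs (by simp),
      ← Finset.mem_inter, common_pairs']
    exact Finset.notMem_empty _
  · have := hT.card_le_card_commonArcs (by simp) (by simp) hα hβ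
    rw [show ({1, 2, 3, 4, 5, 6} : Finset ℕ).card = 6 from rfl, common_arcs] at this
    exact absurd this (by decide)
end
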